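/- arXiv:2007.13507 — 6 statements merged into one kernel-verified Lean document; each statement's English description precedes it below -/
import Mathlib

section
/- Let ξ be a real random variable with long-tailed distribution F (i.e., P(ξ > x) > 0 for all x and P(ξ > x - y)/P(ξ > x) → 1 as x → ∞ for every fixed y), and let A = 1/(1 + e^ξ) ∈ (0,1). Then E[(1-A)^m] ∼ P(ξ > log m) as m → ∞, i.e., the ratio E[(1-A)^m]/F̄(log m) tends to 1. -/
open MeasureTheory Filter

/-- A tail function `F̄` is long-tailed if it is everywhere positive and
`F̄(x-y) ∼ F̄(x)` as `x → ∞` for every fixed `y`. -/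
def IsLongTailedFun (Fbar : ℝ → ℝ) : Prop :=
  (∀ x, 0 < Fbar x) ∧
    ∀ y : ℝ, Tendsto (fun x => Fbar (x - y) / Fbar x) atTop (nhds 1)

/-!
Since `1 - A = sigmoid ξ`, the expectation is `∫ sigmoid x ^ m dν` for the law `ν` of `ξ`, and
`sigmoid x ^ m` is a smoothed step at `log m`: it is at least `1 - e^{-c}` on `(log m + c, ∞)` and
at most `exp (-exp (log m - x) / 2)` for `x ≥ 0`. Keeping only `{ξ > log m + c}` gives the
lower bound. For the upper bound, cut `(x₀, log m - c]` into unit slices: long-tailedness gives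
`F̄(x - n) ≤ eⁿ F̄(x)`, which the doubly exponential decay of `sigmoid ^ m` across the slices beats,
while the mass below `x₀` contributes `O(e^{-δm})`, negligible since `F̄(log m) ≥ C / m`. Letting
`c → ∞` after `m → ∞` squeezes the ratio to `1`.
-/

open Real Set Topology

lemma tendsto_log_natCast_atTop : Tendsto (fun m : ℕ => log m) atTop atTop :=
  tendsto_log_atTop.comp tendsto_natCast_atTop_atTop

namespace IsLongTailedFun

variable {F : ℝ → ℝ}

lemma tendsto_add_div (hF : IsLongTailedFun F) (y : ℝ) :
    Tendsto (fun x => F (x + y) / F x) atTop (𝓝 1) := by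
  simpa only [sub_neg_eq_add] using hF.2 (-y)

lemma eventually_le_pow_mul (hF : IsLongTailedFun F) {K : ℝ} (hK : 1 < K) :
    ∀ᶠ x₀ : ℝ in atTop, ∀ x : ℝ, ∀ n : ℕ, x₀ ≤ x - n → F (x - n) ≤ K ^ n * F x := by
  obtain ⟨x₁, hx₁⟩ := eventually_atTop.1 ((hF.2 1).eventually_le_const hK)
  filter_upwards [eventually_ge_atTop (x₁ - 1)] with x₀ hx₀ x n hn
  induction n with
  | zero => simp
  | succ n ih =>
    push_cast at hn
    have step : F (x - n - 1) ≤ K * F (x - n) := by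
      rw [← div_le_iff₀ (hF.1 _)]
      exact hx₁ _ (by linarith)
    calc F (x - ↑(n + 1)) = F (x - n - 1) := by push_cast; ring_nf
      _ ≤ K * F (x - n) := step
      _ ≤ K * (K ^ n * F x) := mul_le_mul_of_nonneg_left (ih (by linarith)) (by linarith)
      _ = K ^ (n + 1) * F x := by ring

lemma exists_exp_neg_le (hF : IsLongTailedFun F) (hanti : Antitone F) :
    ∃ C > 0, ∀ᶠ x in atTop, C * exp (-x) ≤ F x := by
  obtain ⟨x₀, hx₀⟩ := (hF.eventually_le_pow_mul (one_lt_exp_iff.2 one_pos)).exists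
  refine ⟨exp x₀ * F (x₀ + 1), mul_pos (exp_pos _) (hF.1 _), ?_⟩
  filter_upwards [eventually_ge_atTop x₀] with x hx
  set n := ⌊x - x₀⌋₊
  have hn : x₀ ≤ x - n := by linarith [Nat.floor_le (sub_nonneg.2 hx)]
  have hn' : x - n ≤ x₀ + 1 := by linarith [Nat.lt_floor_add_one (x - x₀)]
  calc exp x₀ * F (x₀ + 1) * exp (-x) = F (x₀ + 1) / exp (x - x₀) := by
        rw [exp_sub, exp_neg]; field_simp
    _ ≤ F (x - n) / exp n := by
        gcongr
        · exact (hF.1 _).le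
        · exact hanti hn'
        · linarith
    _ ≤ F x := by
        rw [div_le_iff₀ (exp_pos _), mul_comm, ← exp_one_pow]
        exact hx₀ x n hn

lemma tendsto_exp_neg_mul_div_comp_log (hF : IsLongTailedFun F) (hanti : Antitone F)
    {b : ℝ} (hb : 0 < b) :
    Tendsto (fun m : ℕ => exp (-(m * b)) / F (log m)) atTop (𝓝 0) := by
  obtain ⟨C, hC, hFC⟩ := hF.exists_exp_neg_le hanti
  have hdecay : Tendsto (fun m : ℕ => (b * C)⁻¹ * ((m * b) ^ 1 * exp (-(m * b)))) atTop (𝓝 0) := by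
    simpa using ((tendsto_pow_mul_exp_neg_atTop_nhds_zero 1).comp
      (tendsto_natCast_atTop_atTop.atTop_mul_const hb)).const_mul (b * C)⁻¹
  refine squeeze_zero' (Eventually.of_forall fun m => div_nonneg (exp_pos _).le (hF.1 _).le)
    ?_ hdecay
  filter_upwards [tendsto_log_natCast_atTop.eventually hFC, eventually_gt_atTop 0] with m hm hm0
  have hm0' : (0 : ℝ) < m := by exact_mod_cast hm0
  rw [exp_neg, exp_log hm0'] at hm
  rw [div_le_iff₀ (hF.1 _)]
  calc exp (-(m * b)) = (b * C)⁻¹ * ((m * b) ^ 1 * exp (-(m * b))) * (C * (m : ℝ)⁻¹) := by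
        field_simp
    _ ≤ _ := by gcongr

end IsLongTailedFun

lemma sigmoid_eq_one_sub (x : ℝ) : sigmoid x = 1 - sigmoid (-x) := by
  rw [← sigmoid_neg, neg_neg]

lemma sigmoid_neg_le_exp_neg (x : ℝ) : sigmoid (-x) ≤ exp (-x) := by
  rw [sigmoid_def, neg_neg, exp_neg]
  exact inv_anti₀ (exp_pos x) (by linarith)

lemma sigmoid_pow_le_one (m : ℕ) (x : ℝ) : sigmoid x ^ m ≤ 1 :=
  pow_le_one₀ (sigmoid_nonneg x) (sigmoid_le_one x)

lemma sigmoid_pow_monotone (m : ℕ) : Monotone fun x => sigmoid x ^ m :=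
  fun _ _ h => pow_le_pow_left₀ (sigmoid_nonneg _) (sigmoid_le h) m

lemma one_sub_mul_exp_neg_le_sigmoid_pow (m : ℕ) (x : ℝ) :
    1 - m * exp (-x) ≤ sigmoid x ^ m := by
  have bernoulli := one_add_mul_le_pow (a := -sigmoid (-x))
    (by linarith [sigmoid_le_one (-x)]) m
  rw [← sub_eq_add_neg, ← sigmoid_eq_one_sub, mul_neg, ← sub_eq_add_neg] at bernoulli
  exact le_trans (by gcongr; exact sigmoid_neg_le_exp_neg x) bernoulli

lemma sigmoid_pow_le_exp (m : ℕ) {x : ℝ} (hx : 0 ≤ x) :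
    sigmoid x ^ m ≤ exp (-(m * exp (-x) / 2)) := by
  have hhalf : exp (-x) / 2 ≤ sigmoid (-x) := by
    rw [← sigmoid_mul_rexp_neg, div_eq_inv_mul, ← sigmoid_zero]
    gcongr
  have hsig : sigmoid x ≤ exp (-(exp (-x) / 2)) := by
    rw [sigmoid_eq_one_sub]
    exact (one_sub_le_exp_neg _).trans (exp_le_exp.2 (neg_le_neg hhalf))
  calc sigmoid x ^ m ≤ exp (-(exp (-x) / 2)) ^ m := by gcongr; exact sigmoid_nonneg x
    _ = exp (-(m * exp (-x) / 2)) := by rw [← exp_nat_mul]; ring_nf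

lemma sigmoid_pow_log_sub_le (m : ℕ) (hm : 0 < m) {y : ℝ} (hy : y ≤ log m) :
    sigmoid (log m - y) ^ m ≤ exp (-(exp y / 2)) := by
  have hm' : (0 : ℝ) < m := by exact_mod_cast hm
  convert sigmoid_pow_le_exp m (sub_nonneg.2 hy) using 4
  rw [neg_sub, exp_sub, exp_log hm']
  field_simp

lemma exp_neg_exp_add_div_two_mul_le (c : ℝ) (n : ℕ) :
    exp (-(exp (c + n) / 2)) * exp 1 ^ (n + 1) ≤ exp (1 - exp c / 2) ^ (n + 1) := by
  rw [exp_one_pow, ← exp_add, ← exp_nat_mul, exp_le_exp, exp_add]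
  have : (n : ℝ) + 1 ≤ exp n := by linarith [add_one_le_exp (n : ℝ)]
  push_cast
  nlinarith [exp_pos c]

section LayerCake

variable {φ : ℝ → ℝ}

-- A discrete layer-cake bound.
lemma le_indicator_add_sum_add (hφ : Monotone φ) (h0 : ∀ x, 0 ≤ φ x) (h1 : ∀ x, φ x ≤ 1)
    (t : ℕ → ℝ) (N : ℕ) (x : ℝ) :
    φ x ≤ (Ioi (t 0)).indicator 1 x +
      ∑ n ∈ Finset.range N, φ (t n) * (Ioi (t (n + 1))).indicator 1 x + φ (t N) := by
  induction N with
  | zero =>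
    rw [Finset.sum_range_zero, add_zero]
    by_cases hx : t 0 < x
    · rw [indicator_of_mem (mem_Ioi.2 hx), Pi.one_apply]
      linarith [h1 x, h0 (t 0)]
    · rw [indicator_of_notMem (notMem_Ioi.2 (not_lt.1 hx)), zero_add]
      exact hφ (not_lt.1 hx)
  | succ N ih =>
    rw [Finset.sum_range_succ]
    by_cases hx : t (N + 1) < x
    · rw [indicator_of_mem (mem_Ioi.2 hx), Pi.one_apply, mul_one]
      linarith [h0 (t (N + 1))]
    · have hterms : 0 ≤ (Ioi (t 0)).indicator 1 x +
          ∑ n ∈ Finset.range (N + 1), φ (t n) * (Ioi (t (n + 1))).indicator 1 x := by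
        have hind : ∀ s, 0 ≤ (Ioi s).indicator (1 : ℝ → ℝ) x :=
          fun _ => indicator_nonneg (fun _ _ => zero_le_one) x
        exact add_nonneg (hind _) (Finset.sum_nonneg fun n _ => mul_nonneg (h0 _) (hind _))
      rw [← Finset.sum_range_succ]
      linarith [hφ (not_lt.1 hx)]

lemma mul_indicator_le (hφ : Monotone φ) (h0 : ∀ x, 0 ≤ φ x) (s x : ℝ) :
    φ s * (Ioi s).indicator 1 x ≤ φ x := by
  by_cases hx : s < x
  · simpa [indicator_of_mem (mem_Ioi.2 hx)] using hφ hx.le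
  · simpa [indicator_of_notMem (notMem_Ioi.2 (not_lt.1 hx))] using h0 x

variable (ν : Measure ℝ)

lemma integrable_of_monotone [IsFiniteMeasure ν] (hφ : Monotone φ) (h0 : ∀ x, 0 ≤ φ x)
    (h1 : ∀ x, φ x ≤ 1) : Integrable φ ν :=
  Integrable.of_bound hφ.measurable.aestronglyMeasurable 1
    (Eventually.of_forall fun x => by rw [norm_of_nonneg (h0 x)]; exact h1 x)

lemma integral_le_measureReal_Ioi_add_sum [IsProbabilityMeasure ν] (hφ : Monotone φ)
    (h0 : ∀ x, 0 ≤ φ x) (h1 : ∀ x, φ x ≤ 1) (t : ℕ → ℝ) (N : ℕ) :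
    ∫ x, φ x ∂ν ≤ ν.real (Ioi (t 0)) +
      ∑ n ∈ Finset.range N, φ (t n) * ν.real (Ioi (t (n + 1))) + φ (t N) := by
  have hind : ∀ s, Integrable ((Ioi s).indicator (1 : ℝ → ℝ)) ν :=
    fun s => (integrable_const 1).indicator measurableSet_Ioi
  have hterm : ∀ n ∈ Finset.range N,
      Integrable (fun x => φ (t n) * (Ioi (t (n + 1))).indicator 1 x) ν :=
    fun n _ => (hind _).const_mul _
  have hsum := integrable_finsetSum _ hterm
  calc ∫ x, φ x ∂ν ≤ ∫ x, (Ioi (t 0)).indicator 1 x +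
        ∑ n ∈ Finset.range N, φ (t n) * (Ioi (t (n + 1))).indicator 1 x + φ (t N) ∂ν :=
        integral_mono (integrable_of_monotone ν hφ h0 h1)
          (((hind _).add hsum).add (integrable_const _))
          (le_indicator_add_sum_add hφ h0 h1 t N)
    _ = _ := by
        rw [integral_add, integral_add, integral_finsetSum]
        · simp [integral_const_mul]
        exacts [hterm, hind _, hsum, (hind _).add hsum, integrable_const _]

lemma mul_measureReal_Ioi_le_integral [IsFiniteMeasure ν] (hφ : Monotone φ)
    (h0 : ∀ x, 0 ≤ φ x) (h1 : ∀ x, φ x ≤ 1) (s : ℝ) :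
    φ s * ν.real (Ioi s) ≤ ∫ x, φ x ∂ν := by
  calc φ s * ν.real (Ioi s) = ∫ x, φ s * (Ioi s).indicator 1 x ∂ν := by
        rw [integral_const_mul, integral_indicator_one measurableSet_Ioi]
    _ ≤ ∫ x, φ x ∂ν :=
        integral_mono (((integrable_const 1).indicator measurableSet_Ioi).const_mul _)
          (integrable_of_monotone ν hφ h0 h1) (mul_indicator_le hφ h0 s)

end LayerCake

section Sigmoid

variable (ν : Measure ℝ)

lemma one_sub_exp_neg_mul_le_integral_sigmoid_pow [IsFiniteMeasure ν] {m : ℕ} (hm : 0 < m)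
    (c : ℝ) : (1 - exp (-c)) * ν.real (Ioi (log m + c)) ≤ ∫ x, sigmoid x ^ m ∂ν := by
  have hm' : (0 : ℝ) < m := by exact_mod_cast hm
  have hsig : 1 - exp (-c) ≤ sigmoid (log m + c) ^ m := by
    have := one_sub_mul_exp_neg_le_sigmoid_pow m (log m + c)
    rwa [neg_add, exp_add, exp_neg (log m), exp_log hm', mul_inv_cancel_left₀ hm'.ne'] at this
  calc _ ≤ sigmoid (log m + c) ^ m * ν.real (Ioi (log m + c)) := by gcongr
    _ ≤ _ := mul_measureReal_Ioi_le_integral ν (sigmoid_pow_monotone m)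
        (fun x => pow_nonneg (sigmoid_nonneg x) m) (sigmoid_pow_le_one m) _

lemma integral_sigmoid_pow_le [IsProbabilityMeasure ν] {x₀ c : ℝ} (hx₀ : 0 ≤ x₀)
    (hc : 2 < exp c)
    (hgrowth : ∀ x : ℝ, ∀ n : ℕ, x₀ ≤ x - n → ν.real (Ioi (x - n)) ≤ exp 1 ^ n * ν.real (Ioi x))
    {m : ℕ} (hm : 0 < m) (hL : x₀ ≤ log m - c) :
    ∫ x, sigmoid x ^ m ∂ν ≤
      ν.real (Ioi (log m - c)) / (1 - exp (1 - exp c / 2)) + exp (-(m * exp (-(x₀ + 1)) / 2)) := by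
  set L := log m
  set q := exp (1 - exp c / 2)
  have hq1 : q < 1 := exp_lt_one_iff.2 (by linarith)
  set N := ⌊L - c - x₀⌋₊
  have hN : x₀ ≤ L - c - N := by linarith [Nat.floor_le (sub_nonneg.2 hL)]
  have hN' : L - c - N ≤ x₀ + 1 := by linarith [Nat.lt_floor_add_one (L - c - x₀)]
  have hslice : ∀ n ∈ Finset.range N, sigmoid (L - c - n) ^ m * ν.real (Ioi (L - c - ↑(n + 1))) ≤
      q ^ (n + 1) * ν.real (Ioi (L - c)) := by
    intro n hn
    have hn : (n : ℝ) + 1 ≤ N := by exact_mod_cast Finset.mem_range.1 hn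
    calc _ ≤ exp (-(exp (c + n) / 2)) * (exp 1 ^ (n + 1) * ν.real (Ioi (L - c))) := by
          gcongr
          · rw [sub_sub]; exact sigmoid_pow_log_sub_le m hm (by linarith)
          · exact hgrowth _ _ (by push_cast; linarith)
      _ ≤ q ^ (n + 1) * ν.real (Ioi (L - c)) := by
          rw [← mul_assoc]; gcongr; exact exp_neg_exp_add_div_two_mul_le c n
  have hlast : sigmoid (L - c - N) ^ m ≤ exp (-(m * exp (-(x₀ + 1)) / 2)) :=
    (sigmoid_pow_monotone m hN').trans (sigmoid_pow_le_exp m (by linarith))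
  calc _ ≤ ν.real (Ioi (L - c)) + ∑ n ∈ Finset.range N,
        sigmoid (L - c - n) ^ m * ν.real (Ioi (L - c - ↑(n + 1))) + sigmoid (L - c - N) ^ m := by
        simpa using integral_le_measureReal_Ioi_add_sum ν (sigmoid_pow_monotone m)
          (fun x => pow_nonneg (sigmoid_nonneg x) m) (sigmoid_pow_le_one m)
          (fun n => L - c - n) N
    _ ≤ ν.real (Ioi (L - c)) + ∑ n ∈ Finset.range N, q ^ (n + 1) * ν.real (Ioi (L - c)) +
        exp (-(m * exp (-(x₀ + 1)) / 2)) :=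
        add_le_add (add_le_add le_rfl (Finset.sum_le_sum hslice)) hlast
    _ = ν.real (Ioi (L - c)) * ∑ n ∈ Finset.range (N + 1), q ^ n +
        exp (-(m * exp (-(x₀ + 1)) / 2)) := by
        rw [Finset.sum_range_succ', ← Finset.sum_mul]; ring
    _ ≤ _ := by
        have hgeom := geom_sum_Ico_le_of_lt_one (m := 0) (n := N + 1) (exp_pos _).le hq1
        rw [← Finset.range_eq_Ico, pow_zero] at hgeom
        gcongr ?_ + _
        rw [← mul_one_div]
        exact mul_le_mul_of_nonneg_left hgeom measureReal_nonneg

end Sigmoid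

lemma antitone_measureReal_Ioi (ν : Measure ℝ) [IsFiniteMeasure ν] :
    Antitone fun x => ν.real (Ioi x) :=
  fun _ _ h => measureReal_mono (Ioi_subset_Ioi h)

section Asymptotics

variable (ν : Measure ℝ) [IsProbabilityMeasure ν] (hν : IsLongTailedFun fun x => ν.real (Ioi x))
include hν

lemma eventually_lt_integral_sigmoid_pow_div {a : ℝ} (ha : a < 1) :
    ∀ᶠ m : ℕ in atTop, a < (∫ x, sigmoid x ^ m ∂ν) / ν.real (Ioi (log m)) := by
  obtain ⟨c, hc⟩ : ∃ c, a < 1 - exp (-c) :=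
    ((tendsto_exp_neg_atTop_nhds_zero.const_sub 1).eventually
      (lt_mem_nhds (by simpa using ha))).exists
  have hlim := ((hν.tendsto_add_div c).comp tendsto_log_natCast_atTop).const_mul (1 - exp (-c))
  rw [mul_one] at hlim
  filter_upwards [hlim.eventually (lt_mem_nhds hc), eventually_gt_atTop 0] with m hm hm0
  refine hm.trans_le ?_
  rw [Function.comp_apply, ← mul_div_assoc]
  exact div_le_div_of_nonneg_right (one_sub_exp_neg_mul_le_integral_sigmoid_pow ν hm0 c)
    measureReal_nonneg

lemma eventually_integral_sigmoid_pow_div_lt {a : ℝ} (ha : 1 < a) :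
    ∀ᶠ m : ℕ in atTop, (∫ x, sigmoid x ^ m ∂ν) / ν.real (Ioi (log m)) < a := by
  have hq : Tendsto (fun c => (1 - exp (1 - exp c / 2))⁻¹) atTop (𝓝 1) := by
    have : Tendsto (fun c => exp (1 - exp c / 2)) atTop (𝓝 0) :=
      tendsto_exp_atBot.comp (tendsto_atBot_add_const_left _ 1
        (tendsto_neg_atTop_atBot.comp (tendsto_exp_atTop.atTop_div_const two_pos)))
    simpa using (this.const_sub 1).inv₀ (by norm_num)
  obtain ⟨c, hc2, hca⟩ : ∃ c, 2 < exp c ∧ (1 - exp (1 - exp c / 2))⁻¹ < a :=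
    ((tendsto_exp_atTop.eventually_gt_atTop 2).and (hq.eventually (gt_mem_nhds ha))).exists
  obtain ⟨x₀, hgrowth, hx₀⟩ := ((hν.eventually_le_pow_mul (one_lt_exp_iff.2 one_pos)).and
    (eventually_ge_atTop 0)).exists
  have hlim := (((hν.tendsto_add_div (-c)).comp tendsto_log_natCast_atTop).mul_const
    (1 - exp (1 - exp c / 2))⁻¹).add (hν.tendsto_exp_neg_mul_div_comp_log
    (antitone_measureReal_Ioi ν) (b := exp (-(x₀ + 1)) / 2) (by positivity))
  rw [one_mul, add_zero] at hlim
  filter_upwards [hlim.eventually (gt_mem_nhds hca), eventually_gt_atTop 0,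
    tendsto_log_natCast_atTop.eventually (eventually_ge_atTop (x₀ + c))] with m hm hm0 hmL
  refine lt_of_le_of_lt ?_ hm
  calc (∫ x, sigmoid x ^ m ∂ν) / ν.real (Ioi (log m)) ≤
      (ν.real (Ioi (log m - c)) / (1 - exp (1 - exp c / 2)) +
        exp (-(m * exp (-(x₀ + 1)) / 2))) / ν.real (Ioi (log m)) := by
        gcongr
        exact integral_sigmoid_pow_le ν hx₀ hc2 hgrowth hm0 (by linarith)
    _ = _ := by simp only [Function.comp_apply, sub_eq_add_neg, mul_div_assoc]; ring

theorem tendsto_integral_sigmoid_pow_div_measureReal_Ioi :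
    Tendsto (fun m : ℕ => (∫ x, sigmoid x ^ m ∂ν) / ν.real (Ioi (log m))) atTop (𝓝 1) :=
  tendsto_order.2 ⟨fun _ ha => eventually_lt_integral_sigmoid_pow_div ν hν ha,
    fun _ ha => eventually_integral_sigmoid_pow_div_lt ν hν ha⟩

end Asymptotics

/-- If `ξ` has a long-tailed distribution and `A = 1/(1+e^ξ)`, then
`E[(1-A)^m] ∼ F̄(log m)` as `m → ∞`. -/
theorem expectation_one_sub_A_pow_asymp {Ω : Type*} [MeasurableSpace Ω]
    (μ : Measure Ω) [IsProbabilityMeasure μ]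
    (ξ : Ω → ℝ) (hξ : Measurable ξ)
    (Fbar : ℝ → ℝ) (hFbar : ∀ x, Fbar x = (μ {ω | x < ξ ω}).toReal)
    (hlong : IsLongTailedFun Fbar)
    (A : Ω → ℝ) (hA : ∀ ω, A ω = 1 / (1 + Real.exp (ξ ω))) :
    Tendsto (fun m : ℕ => (∫ ω, (1 - A ω) ^ m ∂μ) / Fbar (Real.log m))
      atTop (nhds 1) := by
  have : IsProbabilityMeasure (μ.map ξ) := Measure.isProbabilityMeasure_map hξ.aemeasurable
  have hFbar_eq : Fbar = fun x => (μ.map ξ).real (Ioi x) := by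
    ext x
    rw [hFbar, measureReal_def, Measure.map_apply hξ measurableSet_Ioi]
    rfl
  have hA_eq : ∀ ω, 1 - A ω = sigmoid (ξ ω) := fun ω => by
    rw [hA, sigmoid_eq_one_sub, sigmoid_def, neg_neg, one_div]
  subst hFbar_eq
  simp_rw [hA_eq]
  have hint : ∀ m : ℕ, ∫ ω, sigmoid (ξ ω) ^ m ∂μ = ∫ x, sigmoid x ^ m ∂(μ.map ξ) := fun m =>
    (integral_map hξ.aemeasurable (continuous_sigmoid.pow m).aestronglyMeasurable).symm
  simp_rw [hint]
  exact tendsto_integral_sigmoid_pow_div_measureReal_Ioi _ hlong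
end

section
/- Under the setup where ξ = log((1-A)/A) has a long-tailed distribution F, for every fixed integer j ≥ 1, E[A^j (1-A)^m] = o(F̄(log m)) as m → ∞. -/
open MeasureTheory Filter

open Asymptotics

lemma natCast_mul_mul_one_sub_pow_le_one {a : ℝ} (h0 : 0 ≤ a) (h1 : a ≤ 1) (m : ℕ) :
    (m : ℝ) * (a * (1 - a) ^ m) ≤ 1 :=
  calc (m : ℝ) * (a * (1 - a) ^ m) ≤ (1 + m * a) * (1 - a) ^ m := by
        nlinarith [pow_nonneg (sub_nonneg.2 h1) m]
    _ ≤ (1 + a) ^ m * (1 - a) ^ m := by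
        gcongr ?_ * _
        exact one_add_mul_le_pow (by linarith) m
    _ = (1 - a ^ 2) ^ m := by rw [← mul_pow]; ring
    _ ≤ 1 := pow_le_one₀ (by nlinarith) (by nlinarith)

lemma pow_mul_one_sub_pow_le_inv {a : ℝ} (h0 : 0 ≤ a) (h1 : a ≤ 1) {j m : ℕ} (hj : j ≠ 0)
    (hm : m ≠ 0) : a ^ j * (1 - a) ^ m ≤ (m : ℝ)⁻¹ := by
  have hm' : (0 : ℝ) < m := by positivity
  calc a ^ j * (1 - a) ^ m ≤ a * (1 - a) ^ m := by
        gcongr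
        exact pow_le_of_le_one h0 h1 hj
    _ ≤ (m : ℝ)⁻¹ := by
        rw [← one_div, le_div_iff₀ hm', mul_comm]
        exact natCast_mul_mul_one_sub_pow_le_one h0 h1 m

lemma norm_integral_pow_mul_one_sub_pow_le_inv {Ω : Type*} [MeasurableSpace Ω] (μ : Measure Ω)
    [IsProbabilityMeasure μ] {A : Ω → ℝ} (hA : ∀ ω, A ω ∈ Set.Icc (0 : ℝ) 1) {j m : ℕ}
    (hj : j ≠ 0) (hm : m ≠ 0) : ‖∫ ω, A ω ^ j * (1 - A ω) ^ m ∂μ‖ ≤ (m : ℝ)⁻¹ := by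
  have hbound : ∀ ω, ‖A ω ^ j * (1 - A ω) ^ m‖ ≤ (m : ℝ)⁻¹ := fun ω => by
    obtain ⟨h0, h1⟩ := hA ω
    rw [Real.norm_of_nonneg (by have := sub_nonneg.2 h1; positivity)]
    exact pow_mul_one_sub_pow_le_inv h0 h1 hj hm
  simpa using norm_integral_le_of_norm_le_const (μ := μ) (Eventually.of_forall hbound)

lemma antitone_toReal_measure_lt {Ω : Type*} [MeasurableSpace Ω] (μ : Measure Ω)
    [IsFiniteMeasure μ] (ξ : Ω → ℝ) : Antitone fun x => (μ {ω | x < ξ ω}).toReal :=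
  fun _ _ hxy => measureReal_mono fun _ hω => hxy.trans_lt hω

lemma le_pow_mul_apply_add_natCast {f : ℝ → ℝ} {K x₀ : ℝ} (hK : 0 ≤ K)
    (h : ∀ x ≥ x₀, f (x - 1) ≤ K * f x) (n : ℕ) : f x₀ ≤ K ^ n * f (x₀ + n) := by
  induction n with
  | zero => simp
  | succ n ih =>
    have hstep : f (x₀ + n) ≤ K * f (x₀ + (n + 1 : ℕ)) := by
      convert h (x₀ + (n + 1 : ℕ)) (by simp; positivity) using 3
      push_cast; ring
    calc f x₀ ≤ K ^ n * f (x₀ + n) := ih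
      _ ≤ K ^ n * (K * f (x₀ + (n + 1 : ℕ))) := by gcongr
      _ = K ^ (n + 1) * f (x₀ + (n + 1 : ℕ)) := by ring

lemma Antitone.exp_neg_mul_isBigO {f : ℝ → ℝ} (hf : Antitone f) {c x₀ : ℝ} (hc : 0 ≤ c)
    (hx₀ : 0 < f x₀) (h : ∀ x ≥ x₀, f (x - 1) ≤ Real.exp c * f x) :
    (fun x => Real.exp (-(c * x))) =O[atTop] f := by
  refine IsBigO.of_bound (Real.exp (c * (1 - x₀)) / f x₀) ?_
  filter_upwards [eventually_ge_atTop x₀] with x hx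
  set n := ⌈x - x₀⌉₊
  have hiter : f x₀ ≤ Real.exp (c * n) * f (x₀ + n) := by
    simpa [← Real.exp_nat_mul, mul_comm] using
      le_pow_mul_apply_add_natCast (Real.exp_nonneg c) h n
  have hmono : f (x₀ + n) ≤ f x := hf (by linarith [Nat.le_ceil (x - x₀)])
  have hfx : 0 < f x :=
    (pos_of_mul_pos_right (hx₀.trans_le hiter) (Real.exp_nonneg _)).trans_le hmono
  have hlow : f x₀ ≤ Real.exp (c * (x - x₀ + 1)) * f x :=
    calc f x₀ ≤ Real.exp (c * n) * f x := hiter.trans (by gcongr)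
      _ ≤ Real.exp (c * (x - x₀ + 1)) * f x := by
        gcongr
        exact (Nat.ceil_lt_add_one (sub_nonneg.2 hx)).le
  rw [Real.norm_of_nonneg hfx.le, Real.norm_of_nonneg (Real.exp_nonneg _), div_mul_eq_mul_div,
    le_div_iff₀ hx₀]
  calc Real.exp (-(c * x)) * f x₀
      ≤ Real.exp (-(c * x)) * (Real.exp (c * (x - x₀ + 1)) * f x) := by gcongr
    _ = Real.exp (c * (1 - x₀)) * f x := by
        rw [← mul_assoc, ← Real.exp_add]; ring_nf

lemma IsLongTailedFun.exp_neg_mul_isLittleO {F : ℝ → ℝ} (hF : IsLongTailedFun F)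
    (hanti : Antitone F) {c : ℝ} (hc : 0 < c) :
    (fun x => Real.exp (-(c * x))) =o[atTop] F := by
  obtain ⟨x₀, hx₀⟩ := eventually_atTop.1 <|
    (hF.2 1).eventually_lt_const (Real.one_lt_exp_iff.2 (half_pos hc))
  have hshift : ∀ x ≥ x₀, F (x - 1) ≤ Real.exp (c / 2) * F x := fun x hx =>
    ((div_lt_iff₀ (hF.1 x)).1 (hx₀ x hx)).le
  have hdom : (fun x => Real.exp (-(c * x))) =o[atTop] fun x => Real.exp (-(c / 2 * x)) :=
    Real.isLittleO_exp_comp_exp_comp.2 <|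
      (tendsto_id.const_mul_atTop (half_pos hc)).congr fun x => by simp only [id]; ring
  exact hdom.trans_isBigO (hanti.exp_neg_mul_isBigO (half_pos hc).le (hF.1 x₀) hshift)

theorem expectation_Aj_one_sub_A_pow_little_o_general {Ω : Type*} [MeasurableSpace Ω]
    (μ : Measure Ω) [IsProbabilityMeasure μ]
    (A : Ω → ℝ) (hA01 : ∀ ω, A ω ∈ Set.Ioo (0 : ℝ) 1)
    (ξ : Ω → ℝ)
    (Fbar : ℝ → ℝ) (hFbar : ∀ x, Fbar x = (μ {ω | x < ξ ω}).toReal)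
    (hlong : IsLongTailedFun Fbar)
    (j : ℕ) (hj : 1 ≤ j) :
    Tendsto (fun m : ℕ =>
        (∫ ω, A ω ^ j * (1 - A ω) ^ m ∂μ) / Fbar (Real.log m))
      atTop (nhds 0) := by
  have hanti : Antitone Fbar := by
    simpa only [← funext hFbar] using antitone_toReal_measure_lt μ ξ
  have hexp : (fun x => Real.exp (-x)) =o[atTop] Fbar := by
    simpa using hlong.exp_neg_mul_isLittleO hanti one_pos
  have hI : (fun m : ℕ => ∫ ω, A ω ^ j * (1 - A ω) ^ m ∂μ) =O[atTop]
      fun m : ℕ => Real.exp (-Real.log m) := by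
    refine IsBigO.of_bound 1 ?_
    filter_upwards [eventually_ne_atTop 0] with m hm
    rw [one_mul, Real.exp_neg, Real.exp_log (by positivity),
      Real.norm_of_nonneg (inv_nonneg.2 m.cast_nonneg)]
    exact norm_integral_pow_mul_one_sub_pow_le_inv (j := j) μ
      (fun ω => Set.Ioo_subset_Icc_self (hA01 ω)) (by omega) hm
  exact (hI.trans_isLittleO <| hexp.comp_tendsto <|
    Real.tendsto_log_atTop.comp tendsto_natCast_atTop_atTop).tendsto_div_nhds_zero

/-- If `ξ = log((1-A)/A)` has a long-tailed distribution, then for every fixed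
`j ≥ 1`, `E[A^j (1-A)^m] = o(F̄(log m))` as `m → ∞`. -/
theorem expectation_Aj_one_sub_A_pow_little_o {Ω : Type*} [MeasurableSpace Ω]
    (μ : Measure Ω) [IsProbabilityMeasure μ]
    (A : Ω → ℝ) (hAmeas : Measurable A) (hA01 : ∀ ω, A ω ∈ Set.Ioo (0 : ℝ) 1)
    (ξ : Ω → ℝ) (hξ : ∀ ω, ξ ω = Real.log ((1 - A ω) / A ω))
    (Fbar : ℝ → ℝ) (hFbar : ∀ x, Fbar x = (μ {ω | x < ξ ω}).toReal)
    (hlong : IsLongTailedFun Fbar)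
    (j : ℕ) (hj : 1 ≤ j) :
    Tendsto (fun m : ℕ =>
        (∫ ω, A ω ^ j * (1 - A ω) ^ m ∂μ) / Fbar (Real.log m))
      atTop (nhds 0) :=
  expectation_Aj_one_sub_A_pow_little_o_general μ A hA01 ξ Fbar hFbar hlong j hj
end

section
/- If ξ has a long-tailed distribution F, then there exist constants γ < ∞ and ε > 0 such that for all m > 1 and all integers 1 ≤ j ≤ εm, E[A^j (1-A)^m] ≤ γ · (j^j m^m / (m+j)^{m+j}) · F̄(log m − log j), where A = 1/(1+e^ξ). -/
open MeasureTheory Filter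

/-!
Write `A ^ j * (1 - A) ^ m = exp (L ξ)` with `L s = m s - (m + j) log (1 + e ^ s)`. The function `L`
is maximal at `t = log m - log j`, where `exp (L t) = j ^ j m ^ m / (m + j) ^ (m + j)`, and for
`20 j ≤ m` it drops by at least `1/2` over every unit step to the left of `t`. So `exp (L ξ)` is at
most `e^(-k/2) exp (L t)` on `{ξ ≤ t - k}`, and summing over the layers `t - k - 1 < ξ ≤ t - k`,
`k < ⌈t⌉`, gives
`E[A ^ j (1 - A) ^ m] ≤ exp (L t) (∑ₖ e^(-k/2) F̄(t - k - 1) + e^(-⌈t⌉/2))`.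
A long tail satisfies `F̄(t - k) ≤ C r ^ k F̄(t)` for every `r > 1`; taking `r e^(-1/2) < 1` bounds
the sum by a multiple of `F̄(t)`, and the last term as well because `F̄(t - ⌈t⌉) ≥ F̄(0)`.
-/

open Real Set

/-- `log (A ^ j * (1 - A) ^ m)` for `A = 1 / (1 + exp s)`. -/
noncomputable def logKernel (m j s : ℝ) : ℝ := m * s - (m + j) * log (1 + exp s)

lemma exp_logKernel (m j : ℕ) (s : ℝ) :
    exp (logKernel m j s) = (1 / (1 + exp s)) ^ j * (1 - 1 / (1 + exp s)) ^ m := by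
  have h1 : 1 + exp s ≠ 0 := by positivity
  rw [logKernel, exp_sub, exp_nat_mul, ← Nat.cast_add, exp_nat_mul, exp_log (by positivity),
    one_sub_div h1, add_sub_cancel_left]
  ring

lemma exp_logKernel_of_mul_exp_eq {m j : ℕ} {t : ℝ} (hj : 0 < j) (ht : j * exp t = m) :
    exp (logKernel m j t) = (j : ℝ) ^ j * (m : ℝ) ^ m / ((m : ℝ) + j) ^ (m + j) := by
  have hj' : (j : ℝ) ≠ 0 := by positivity
  have hA : 1 / (1 + exp t) = j / (m + j) := by
    rw [← ht]; field_simp; ring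
  rw [exp_logKernel, hA, one_sub_div (by positivity), add_sub_cancel_right]
  ring

lemma hasDerivAt_logKernel (m j s : ℝ) :
    HasDerivAt (logKernel m j) ((m - j * exp s) / (1 + exp s)) s := by
  have h1 : 0 < 1 + exp s := by positivity
  refine (((hasDerivAt_id' s).const_mul m).sub
    ((((hasDerivAt_exp s).const_add 1).log h1.ne').const_mul (m + j))).congr_deriv ?_
  field_simp
  ring

lemma continuous_logKernel (m j : ℝ) : Continuous (logKernel m j) :=
  continuous_iff_continuousAt.2 fun s => (hasDerivAt_logKernel m j s).continuousAt

lemma monotoneOn_logKernel {m j t : ℝ} (hj : 0 ≤ j) (ht : j * exp t = m) :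
    MonotoneOn (logKernel m j) (Iic t) := by
  refine monotoneOn_of_hasDerivWithinAt_nonneg (convex_Iic t)
    (continuous_logKernel m j).continuousOn
    (fun s _ => (hasDerivAt_logKernel m j s).hasDerivWithinAt) fun s hs => ?_
  rw [interior_Iic] at hs
  have : j * exp s ≤ m := ht ▸ mul_le_mul_of_nonneg_left (exp_le_exp.2 hs.le) hj
  exact div_nonneg (by linarith) (by positivity)

lemma antitoneOn_logKernel {m j t : ℝ} (hj : 0 ≤ j) (ht : j * exp t = m) :
    AntitoneOn (logKernel m j) (Ici t) := by
  refine antitoneOn_of_hasDerivWithinAt_nonpos (convex_Ici t)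
    (continuous_logKernel m j).continuousOn
    (fun s _ => (hasDerivAt_logKernel m j s).hasDerivWithinAt) fun s hs => ?_
  rw [interior_Ici] at hs
  have : m ≤ j * exp s := ht ▸ mul_le_mul_of_nonneg_left (exp_le_exp.2 hs.le) hj
  exact div_nonpos_of_nonpos_of_nonneg (by linarith) (by positivity)

lemma logKernel_le {m j t : ℝ} (hj : 0 ≤ j) (ht : j * exp t = m) (s : ℝ) :
    logKernel m j s ≤ logKernel m j t := by
  rcases le_total s t with hst | hts
  · exact monotoneOn_logKernel hj ht hst self_mem_Iic hst
  · exact antitoneOn_logKernel hj ht self_mem_Ici hts hts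

lemma logKernel_sub_one_le {m j s : ℝ} (hj : 1 ≤ j) (hm : 20 * j ≤ m) (hs : j * exp s ≤ m) :
    logKernel m j (s - 1) ≤ logKernel m j s - 1 / 2 := by
  have he := exp_one_gt_d9
  set e := exp 1
  set a := exp (s - 1)
  have hes : exp s = a * e := by rw [← exp_add]; ring_nf
  rw [hes] at hs
  have hm0 : 0 < m + j := by linarith
  have hmje : 0 < m + j * e := by nlinarith
  -- the ratio `(1 + e^s) / (1 + e^(s-1))` increases with `s`, and `j e^s = m` at the right end
  have hratio : (1 + exp s) / (1 + a) ≤ e * ((m + j) / (m + j * e)) := by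
    rw [hes, div_le_iff₀ (by positivity), mul_div_assoc', div_mul_eq_mul_div,
      le_div_iff₀ hmje]
    nlinarith [mul_nonneg (by linarith : (0:ℝ) ≤ e - 1) (by linarith : 0 ≤ m - j * (a * e))]
  have hlog : j + 1 / 2 ≤ (m + j) * log ((m + j * e) / (m + j)) :=
    calc j + 1 / 2 ≤ (m + j) * (j * (e - 1)) / (m + j * e) := by
          rw [le_div_iff₀ hmje]
          nlinarith [mul_nonneg (by linarith : 0 ≤ m - 20 * j) (by linarith : (0:ℝ) ≤ j),
            mul_nonneg (by linarith : 0 ≤ j - 1) (by linarith : (0:ℝ) ≤ m),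
            mul_nonneg (mul_nonneg (by linarith : (0:ℝ) ≤ j) (by linarith : (0:ℝ) ≤ m))
              (by linarith : 0 ≤ e - 2.7182818283)]
      _ = (m + j) * (1 - ((m + j * e) / (m + j))⁻¹) := by field_simp; ring
      _ ≤ _ := mul_le_mul_of_nonneg_left (one_sub_inv_le_log_of_pos (by positivity)) hm0.le
  have hlog_ratio : log (1 + exp s) - log (1 + a) ≤ 1 - log ((m + j * e) / (m + j)) :=
    calc log (1 + exp s) - log (1 + a) = log ((1 + exp s) / (1 + a)) :=
          (log_div (by positivity) (by positivity)).symm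
      _ ≤ log (e * ((m + j) / (m + j * e))) := log_le_log (by positivity) hratio
      _ = 1 - log ((m + j * e) / (m + j)) := by
          rw [log_mul (by positivity) (by positivity), log_exp, ← inv_div, log_inv]; ring
  unfold logKernel
  nlinarith [mul_le_mul_of_nonneg_left hlog_ratio hm0.le]

lemma logKernel_sub_nat_le {m j t : ℝ} (hj : 1 ≤ j) (hm : 20 * j ≤ m) (ht : j * exp t = m)
    (k : ℕ) : logKernel m j (t - k) ≤ logKernel m j t - k / 2 := by
  induction k with
  | zero => simp
  | succ k ih =>
    have hs : j * exp (t - k) ≤ m :=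
      ht ▸ mul_le_mul_of_nonneg_left (exp_le_exp.2 (by simp)) (by linarith)
    calc logKernel m j (t - (k + 1 : ℕ)) = logKernel m j (t - k - 1) := by push_cast; ring_nf
      _ ≤ logKernel m j (t - k) - 1 / 2 := logKernel_sub_one_le hj hm hs
      _ ≤ logKernel m j t - (k + 1 : ℕ) / 2 := by push_cast; linarith

namespace IsLongTailedFun

variable {Fbar : ℝ → ℝ}

lemma exists_sub_one_le_mul (hF : IsLongTailedFun Fbar) {r : ℝ} (hr : 1 < r) :
    ∃ x₀, ∀ x ≥ x₀, Fbar (x - 1) ≤ r * Fbar x := by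
  obtain ⟨x₀, hx₀⟩ := eventually_atTop.1 ((hF.2 1).eventually (eventually_le_nhds hr))
  exact ⟨x₀, fun x hx => (div_le_iff₀ (hF.1 x)).1 (hx₀ x hx)⟩

lemma exists_sub_nat_le (hF : IsLongTailedFun Fbar) (hanti : Antitone Fbar)
    (hle : ∀ x, Fbar x ≤ 1) {r : ℝ} (hr : 1 < r) :
    ∃ C > 0, ∀ (k : ℕ) (x : ℝ), Fbar (x - k) ≤ C * r ^ k * Fbar x := by
  obtain ⟨x₀, hx₀⟩ := hF.exists_sub_one_le_mul hr
  have hpos := hF.1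
  refine ⟨(Fbar x₀)⁻¹, inv_pos.2 (hpos x₀), fun k => ?_⟩
  induction k with
  | zero =>
    intro x
    simpa using le_mul_of_one_le_left (hpos x).le (one_le_inv_iff₀.2 ⟨hpos x₀, hle x₀⟩)
  | succ k ih =>
    intro x
    rcases le_or_gt x₀ x with hx | hx
    · calc Fbar (x - (k + 1 : ℕ)) = Fbar (x - 1 - k) := by push_cast; ring_nf
        _ ≤ (Fbar x₀)⁻¹ * r ^ k * Fbar (x - 1) := ih _
        _ ≤ (Fbar x₀)⁻¹ * r ^ k * (r * Fbar x) :=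
          mul_le_mul_of_nonneg_left (hx₀ x hx)
            (mul_nonneg (inv_nonneg.2 (hpos x₀).le) (pow_nonneg (by linarith) k))
        _ = (Fbar x₀)⁻¹ * r ^ (k + 1) * Fbar x := by ring
    · -- below `x₀` the crude bound `Fbar ≤ 1 ≤ Fbar x / Fbar x₀` replaces the long-tail step
      calc Fbar (x - (k + 1 : ℕ)) ≤ 1 := hle _
        _ ≤ r ^ (k + 1) := one_le_pow₀ hr.le
        _ ≤ r ^ (k + 1) * (Fbar x / Fbar x₀) := by
          refine le_mul_of_one_le_right (pow_nonneg (by linarith) _) ?_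
          rw [one_le_div (hpos x₀)]
          exact hanti hx.le
        _ = (Fbar x₀)⁻¹ * r ^ (k + 1) * Fbar x := by ring

lemma exists_sum_pow_mul_le (hF : IsLongTailedFun Fbar) (hanti : Antitone Fbar)
    (hle : ∀ x, Fbar x ≤ 1) {q : ℝ} (hq0 : 0 ≤ q) (hq1 : q < 1) :
    ∃ γ, ∀ (K : ℕ) (t : ℝ), ∑ k ∈ Finset.range K, q ^ k * Fbar (t - (k + 1)) ≤ γ * Fbar t := by
  -- any `1 < r < 1 / q` does
  set r := 2 / (1 + q)
  have hr : 1 < r := by rw [lt_div_iff₀ (by linarith)]; linarith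
  have hqr0 : 0 ≤ q * r := by positivity
  have hqr : q * r < 1 := by rw [mul_div_assoc', div_lt_one (by linarith)]; linarith
  obtain ⟨C, hC0, hC⟩ := hF.exists_sub_nat_le hanti hle hr
  refine ⟨C * r / (1 - q * r), fun K t => ?_⟩
  calc ∑ k ∈ Finset.range K, q ^ k * Fbar (t - (k + 1))
      ≤ ∑ k ∈ Finset.range K, q ^ k * (C * r ^ (k + 1) * Fbar t) := by
        gcongr with k
        exact_mod_cast hC (k + 1) t
    _ = C * r * Fbar t * ∑ k ∈ Finset.range K, (q * r) ^ k := by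
        rw [Finset.mul_sum]
        refine Finset.sum_congr rfl fun k _ => by ring
    _ ≤ C * r * Fbar t * (1 / (1 - q * r)) := by
        have hFt := hF.1 t
        gcongr
        simpa using geom_sum_Ico_le_of_lt_one (m := 0) (n := K) hqr0 hqr
    _ = C * r / (1 - q * r) * Fbar t := by ring

lemma exists_pow_ceil_le (hF : IsLongTailedFun Fbar) (hanti : Antitone Fbar)
    (hle : ∀ x, Fbar x ≤ 1) {q : ℝ} (hq0 : 0 ≤ q) (hq1 : q < 1) :
    ∃ γ, ∀ t : ℝ, q ^ ⌈t⌉₊ ≤ γ * Fbar t := by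
  set r := 2 / (1 + q)
  have hr : 1 < r := by rw [lt_div_iff₀ (by linarith)]; linarith
  have hqr : q * r ≤ 1 := by rw [mul_div_assoc', div_le_one (by linarith)]; linarith
  obtain ⟨C, hC0, hC⟩ := hF.exists_sub_nat_le hanti hle hr
  refine ⟨C / Fbar 0, fun t => ?_⟩
  have hF0 := hF.1 0
  have hFt := hF.1 t
  have h0 : Fbar 0 ≤ Fbar (t - ⌈t⌉₊) := hanti (by linarith [Nat.le_ceil t])
  have hK := hC ⌈t⌉₊ t
  calc q ^ ⌈t⌉₊ ≤ q ^ ⌈t⌉₊ * (Fbar (t - ⌈t⌉₊) / Fbar 0) :=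
        le_mul_of_one_le_right (by positivity) ((one_le_div hF0).2 h0)
    _ ≤ q ^ ⌈t⌉₊ * (C * r ^ ⌈t⌉₊ * Fbar t / Fbar 0) := by gcongr
    _ = (q * r) ^ ⌈t⌉₊ * (C / Fbar 0 * Fbar t) := by ring
    _ ≤ C / Fbar 0 * Fbar t :=
        mul_le_of_le_one_left (by positivity) (pow_le_one₀ (by positivity) hqr)

end IsLongTailedFun

lemma le_mul_sum_indicator_add_pow {g : ℝ → ℝ} {t M q : ℝ} (hq : 0 ≤ q) (hM : 0 ≤ M)
    (hgM : ∀ σ, g σ ≤ M) (hmono : MonotoneOn g (Iic t)) (hdecay : ∀ k : ℕ, g (t - k) ≤ q ^ k * M)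
    (K : ℕ) (σ : ℝ) :
    g σ ≤ M * (∑ k ∈ Finset.range K, q ^ k * (Ioi (t - (k + 1))).indicator 1 σ + q ^ K) := by
  induction K with
  | zero => simpa using hgM σ
  | succ K ih =>
    rw [Finset.sum_range_succ]
    by_cases hσ : σ ∈ Ioi (t - (K + 1))
    · rw [indicator_of_mem hσ, Pi.one_apply, mul_one]
      nlinarith [pow_nonneg hq (K + 1)]
    · have hS : 0 ≤ ∑ k ∈ Finset.range K, q ^ k * (Ioi (t - (k + 1))).indicator (1 : ℝ → ℝ) σ :=
        Finset.sum_nonneg fun k _ => mul_nonneg (pow_nonneg hq k) (indicator_nonneg (by simp) σ)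
      rw [indicator_of_notMem hσ, mul_zero, add_zero]
      replace hσ : σ ≤ t - (K + 1 : ℕ) := by push_cast; exact (not_lt.1 hσ)
      have hK : t - (K + 1 : ℕ) ≤ t := sub_le_self _ (Nat.cast_nonneg _)
      calc g σ ≤ g (t - (K + 1 : ℕ)) := hmono (hσ.trans hK) hK hσ
        _ ≤ q ^ (K + 1) * M := hdecay _
        _ ≤ _ := by nlinarith

lemma integral_comp_le_sum_measureReal {Ω : Type*} [MeasurableSpace Ω] {μ : Measure Ω}
    [IsProbabilityMeasure μ] {ξ : Ω → ℝ} (hξ : Measurable ξ) {g : ℝ → ℝ} {t M q : ℝ}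
    (hq : 0 ≤ q) (hg0 : ∀ σ, 0 ≤ g σ) (hgM : ∀ σ, g σ ≤ M) (hmono : MonotoneOn g (Iic t))
    (hdecay : ∀ k : ℕ, g (t - k) ≤ q ^ k * M) (K : ℕ) :
    ∫ ω, g (ξ ω) ∂μ
      ≤ M * (∑ k ∈ Finset.range K, q ^ k * μ.real {ω | t - (k + 1) < ξ ω} + q ^ K) := by
  have hint : ∀ a, Integrable (fun ω => (Ioi a).indicator (1 : ℝ → ℝ) (ξ ω)) μ :=
    fun a => (integrable_const (1 : ℝ)).indicator (hξ measurableSet_Ioi) |>.congr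
      (ae_of_all _ fun ω => indicator_comp_right (g := (1 : ℝ → ℝ)) ξ)
  have hind : ∀ a, ∫ ω, (Ioi a).indicator (1 : ℝ → ℝ) (ξ ω) ∂μ = μ.real {ω | a < ξ ω} :=
    fun a => integral_indicator_one (hξ measurableSet_Ioi)
  have hsum : Integrable (fun ω => ∑ k ∈ Finset.range K,
      q ^ k * (Ioi (t - (k + 1))).indicator (1 : ℝ → ℝ) (ξ ω)) μ :=
    integrable_finsetSum _ fun k _ => (hint _).const_mul _
  calc ∫ ω, g (ξ ω) ∂μ
      ≤ ∫ ω, M * (∑ k ∈ Finset.range K, q ^ k * (Ioi (t - (k + 1))).indicator 1 (ξ ω) + q ^ K)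
          ∂μ :=
        integral_mono_of_nonneg (ae_of_all _ fun ω => hg0 _)
          ((hsum.add (integrable_const _)).const_mul _)
          (ae_of_all _ fun ω => le_mul_sum_indicator_add_pow hq ((hg0 t).trans (hgM t)) hgM
            hmono hdecay K (ξ ω))
    _ = _ := by
        rw [integral_const_mul, integral_add hsum (integrable_const _),
          integral_finsetSum _ fun k _ => (hint _).const_mul _]
        simp [integral_const_mul, hind]

lemma antitone_measureReal_lt {Ω : Type*} [MeasurableSpace Ω] (μ : Measure Ω) [IsFiniteMeasure μ]
    (ξ : Ω → ℝ) : Antitone fun x => μ.real {ω | x < ξ ω} :=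
  fun _ _ hab => measureReal_mono fun _ h => hab.trans_lt h

/-- If `ξ` has a long-tailed distribution and `A = 1/(1+e^ξ)`, then there are
`γ < ∞` and `ε > 0` such that for all `m > 1` and `1 ≤ j ≤ εm`,
`E[A^j (1-A)^m] ≤ γ (j^j m^m / (m+j)^(m+j)) F̄(log m − log j)`. -/
theorem expectation_Aj_one_sub_A_pow_upper {Ω : Type*} [MeasurableSpace Ω]
    (μ : Measure Ω) [IsProbabilityMeasure μ]
    (ξ : Ω → ℝ) (hξ : Measurable ξ)
    (Fbar : ℝ → ℝ) (hFbar : ∀ x, Fbar x = (μ {ω | x < ξ ω}).toReal)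
    (hlong : IsLongTailedFun Fbar)
    (A : Ω → ℝ) (hA : ∀ ω, A ω = 1 / (1 + Real.exp (ξ ω))) :
    ∃ γ : ℝ, ∃ ε > (0 : ℝ), ∀ m j : ℕ, 1 < m → 1 ≤ j → (j : ℝ) ≤ ε * m →
      ∫ ω, A ω ^ j * (1 - A ω) ^ m ∂μ
        ≤ γ * ((j : ℝ) ^ j * (m : ℝ) ^ m / ((m : ℝ) + j) ^ (m + j))
            * Fbar (Real.log m - Real.log j) := by
  obtain rfl : Fbar = fun x => μ.real {ω | x < ξ ω} := funext hFbar
  have hanti := antitone_measureReal_lt μ ξ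
  have hle : ∀ x, μ.real {ω | x < ξ ω} ≤ 1 := fun x => measureReal_le_one
  set q := exp (-(1 / 2))
  have hq0 : 0 ≤ q := (exp_pos _).le
  have hq1 : q < 1 := exp_lt_one_iff.2 (by norm_num)
  obtain ⟨γ₁, hγ₁⟩ := hlong.exists_sum_pow_mul_le hanti hle hq0 hq1
  obtain ⟨γ₂, hγ₂⟩ := hlong.exists_pow_ceil_le hanti hle hq0 hq1
  refine ⟨γ₁ + γ₂, 1 / 20, by norm_num, fun m j _ hj hjm => ?_⟩
  have hj0 : (0 : ℝ) < j := by exact_mod_cast hj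
  have hj1 : (1 : ℝ) ≤ j := by exact_mod_cast hj
  set t := log m - log j
  have ht : (j : ℝ) * exp t = m := by
    rw [exp_sub, exp_log hj0, exp_log (by linarith), mul_div_cancel₀ _ hj0.ne']
  have hdecay (k : ℕ) : exp (logKernel m j (t - k)) ≤ q ^ k * exp (logKernel m j t) := by
    rw [← exp_nat_mul, ← exp_add]
    exact exp_le_exp.2 (by linarith [logKernel_sub_nat_le hj1 (by linarith) ht k])
  have hbound := integral_comp_le_sum_measureReal (μ := μ) hξ hq0 (fun s => (exp_pos _).le)
    (fun s => exp_le_exp.2 (logKernel_le hj0.le ht s))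
    (exp_monotone.comp_monotoneOn (monotoneOn_logKernel hj0.le ht)) hdecay ⌈t⌉₊
  have hf : ∀ ω, A ω ^ j * (1 - A ω) ^ m = exp (logKernel m j (ξ ω)) := fun ω => by
    rw [hA, exp_logKernel]
  simp only [hf, ← exp_logKernel_of_mul_exp_eq hj ht]
  calc _ ≤ _ := hbound
    _ ≤ exp (logKernel m j t) * (γ₁ * μ.real {ω | t < ξ ω} + γ₂ * μ.real {ω | t < ξ ω}) := by
        gcongr
        exacts [hγ₁ _ t, hγ₂ t]
    _ = _ := by ring
end

section
/- Let (Z_n) be the branching process with one immigrant per generation in random environment (A_n) i.i.d. with values in (0,1): Z_0 = 0 and conditionally on the environment, Z_{n+1} = Σ_{i=1}^{Z_n + 1} B_{n+1,i} where the B_{n+1,i} are i.i.d. geometric with parameter A_n. If ξ := log((1-A)/A) has a long-tailed distribution F, then P(Z_1 > m) ∼ F̄(log m) as m → ∞. -/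
open MeasureTheory Filter

/-!
Conditionally on `A₀`, `P(Z₁ > m) = g_m(ξ)` with `g_m(x) = (1 + e^{-x})^{-(m+1)}`. Bernoulli's
inequality gives `g_m(x) ≥ 1 - 2e^{-j}` for `x > log m + j`, and `g_m(x) ≤ e^{x - log m}` for
all `x`. The first bound yields `P(Z₁ > m) ≥ (1 - 2e^{-j}) F̄(log m + j)`. For the second, cut
`{ξ ≤ log m - j}` into unit shells `(log m - n - 1, log m - n]`, `n ≥ j`, on which
`g_m ≤ e^{-n}`; long-tailedness gives `F̄(x - n) ≤ C 2ⁿ F̄(x)` uniformly, and since `2 < e` the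
shells contribute `O((2/e)^j) F̄(log m)`. Long-tailedness at fixed `j` then squeezes the ratio
to `1` as `j → ∞`.
-/

open Set Topology

theorem tendsto_of_forall_eventually_le_of_le {ι κ α : Type*} [TopologicalSpace α] [LinearOrder α]
    [OrderTopology α] {l : Filter ι} {p : Filter κ} [p.NeBot] {f : ι → α} {a b : κ → ι → α}
    {A B : κ → α} {c : α} (ha : ∀ j, Tendsto (a j) l (𝓝 (A j)))
    (hb : ∀ j, Tendsto (b j) l (𝓝 (B j))) (hA : Tendsto A p (𝓝 c)) (hB : Tendsto B p (𝓝 c))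
    (haf : ∀ j, ∀ᶠ i in l, a j i ≤ f i) (hfb : ∀ j, ∀ᶠ i in l, f i ≤ b j i) :
    Tendsto f l (𝓝 c) := by
  refine tendsto_order.2 ⟨fun d hd => ?_, fun d hd => ?_⟩
  · obtain ⟨j, hj⟩ := ((tendsto_order.1 hA).1 d hd).exists
    filter_upwards [(tendsto_order.1 (ha j)).1 d hj, haf j] with i h₁ h₂ using h₁.trans_le h₂
  · obtain ⟨j, hj⟩ := ((tendsto_order.1 hB).2 d hd).exists
    filter_upwards [(tendsto_order.1 (hb j)).2 d hj, hfb j] with i h₁ h₂ using h₂.trans_lt h₁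

theorem sub_natCast_le_two_pow_mul {F : ℝ → ℝ} {x₀ : ℝ} (hF : ∀ x ≥ x₀, F (x - 1) ≤ 2 * F x) :
    ∀ (k : ℕ) (x : ℝ), x₀ + k ≤ x → F (x - k) ≤ 2 ^ k * F x := by
  intro k
  induction k with
  | zero => simp
  | succ k ih =>
    intro x hx
    push_cast at hx ⊢
    calc F (x - (k + 1)) = F (x - 1 - k) := by ring_nf
      _ ≤ 2 ^ k * F (x - 1) := ih (x - 1) (by linarith)
      _ ≤ 2 ^ k * (2 * F x) := by gcongr; exact hF x (by linarith)
      _ = 2 ^ (k + 1) * F x := by ring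

namespace IsLongTailedFun

variable {F : ℝ → ℝ}

theorem exists_sub_one_le_two_mul (hF : IsLongTailedFun F) :
    ∃ x₀, ∀ x ≥ x₀, F (x - 1) ≤ 2 * F x := by
  obtain ⟨x₀, hx₀⟩ := eventually_atTop.1 ((hF.2 1).eventually (eventually_le_nhds one_lt_two))
  exact ⟨x₀, fun x hx => (div_le_iff₀ (hF.1 x)).1 (hx₀ x hx)⟩

/-- Potter-type bound: beyond the range where doubling applies, boundedness of `F` takes over. -/
theorem exists_sub_natCast_le_mul_two_pow_mul (hF : IsLongTailedFun F) (hanti : Antitone F)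
    {B : ℝ} (hB : ∀ x, F x ≤ B) :
    ∃ C ≥ 0, ∃ x₀, ∀ x ≥ x₀, ∀ k : ℕ, F (x - k) ≤ C * 2 ^ k * F x := by
  obtain ⟨x₀, hx₀⟩ := hF.exists_sub_one_le_two_mul
  have hdouble := sub_natCast_le_two_pow_mul hx₀
  refine ⟨max 1 (B / F (x₀ + 1)), by positivity, x₀, fun x hx k => ?_⟩
  by_cases hk : x₀ + k ≤ x
  · calc F (x - k) ≤ 2 ^ k * F x := hdouble k x hk
      _ ≤ max 1 (B / F (x₀ + 1)) * 2 ^ k * F x := by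
        rw [mul_assoc]
        exact le_mul_of_one_le_left (by positivity [(hF.1 x).le]) (le_max_left _ _)
  · set i := ⌊x - x₀⌋₊
    have hi : (i : ℝ) ≤ x - x₀ := Nat.floor_le (by linarith)
    have hik : i ≤ k := by
      have : (i : ℝ) < k := by linarith
      exact_mod_cast this.le
    have hFx : F (x₀ + 1) ≤ 2 ^ i * F x :=
      (hanti (by linarith [Nat.lt_floor_add_one (x - x₀)])).trans (hdouble i x (by linarith))
    have hpos := hF.1 (x₀ + 1)
    calc F (x - k) ≤ B := hB _
      _ = B / F (x₀ + 1) * F (x₀ + 1) := by field_simp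
      _ ≤ max 1 (B / F (x₀ + 1)) * (2 ^ i * F x) := by gcongr; exact le_max_right _ _
      _ ≤ max 1 (B / F (x₀ + 1)) * 2 ^ k * F x := by
        rw [mul_assoc]; gcongr; exacts [(hF.1 x).le, one_le_two]

end IsLongTailedFun

theorem one_sub_mul_le_inv_one_add_pow {u : ℝ} (hu : 0 ≤ u) (n : ℕ) :
    1 - n * u ≤ (1 + u)⁻¹ ^ n := by
  have h1u : 0 < 1 + u := by linarith
  have hfrac : u / (1 + u) ≤ u := div_le_self hu (by linarith)
  have hinv : (1 + u)⁻¹ = 1 + -(u / (1 + u)) := by field_simp; ring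
  calc 1 - n * u ≤ 1 + n * -(u / (1 + u)) := by
        linarith [mul_le_mul_of_nonneg_left hfrac n.cast_nonneg]
    _ ≤ (1 + u)⁻¹ ^ n := by
      rw [hinv]
      exact one_add_mul_le_pow (by linarith [div_le_one_of_le₀ (by linarith : u ≤ 1 + u) h1u.le]) n

theorem inv_one_add_pow_le_inv_one_add_mul {u : ℝ} (hu : 0 ≤ u) (n : ℕ) :
    (1 + u)⁻¹ ^ n ≤ (1 + n * u)⁻¹ := by
  rw [inv_pow]
  exact inv_anti₀ (by positivity) (one_add_mul_le_pow (by linarith) n)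

/-- `geomTail m x` is `P(Z₁ > m | ξ = x)`: given `A₀`, `Z₁` is geometric with success probability
`A₀`, and `1 - A₀ = (1 + e^{-ξ})⁻¹`. -/
noncomputable def geomTail (m : ℕ) (x : ℝ) : ℝ := (1 + Real.exp (-x))⁻¹ ^ (m + 1)

theorem measurable_geomTail (m : ℕ) : Measurable (geomTail m) := by
  unfold geomTail; fun_prop

theorem geomTail_le_one (m : ℕ) (x : ℝ) : geomTail m x ≤ 1 :=
  pow_le_one₀ (by positivity) (inv_le_one_of_one_le₀ (by linarith [Real.exp_pos (-x)]))

theorem one_sub_two_mul_exp_neg_le_geomTail {m : ℕ} (hm : 1 ≤ m) {x y : ℝ}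
    (hx : Real.log m + y < x) : 1 - 2 * Real.exp (-y) ≤ geomTail m x := by
  have hm' : (1 : ℝ) ≤ m := by exact_mod_cast hm
  have hexp : m * Real.exp (-x) ≤ Real.exp (-y) := by
    calc m * Real.exp (-x) = Real.exp (Real.log m - x) := by
          rw [Real.exp_sub, Real.exp_log (by linarith), Real.exp_neg, div_eq_mul_inv]
      _ ≤ Real.exp (-y) := Real.exp_le_exp.2 (by linarith)
  calc 1 - 2 * Real.exp (-y) ≤ 1 - ((m + 1 : ℕ) : ℝ) * Real.exp (-x) := by
        push_cast; nlinarith [Real.exp_pos (-x)]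
    _ ≤ geomTail m x := one_sub_mul_le_inv_one_add_pow (Real.exp_pos _).le _

theorem geomTail_le_exp_sub_log {m : ℕ} (hm : 1 ≤ m) (x : ℝ) :
    geomTail m x ≤ Real.exp (x - Real.log m) := by
  have hm' : (0 : ℝ) < m := by exact_mod_cast hm
  calc geomTail m x ≤ (1 + ((m + 1 : ℕ) : ℝ) * Real.exp (-x))⁻¹ :=
        inv_one_add_pow_le_inv_one_add_mul (Real.exp_pos _).le _
    _ ≤ (m * Real.exp (-x))⁻¹ := by
        gcongr
        push_cast; nlinarith [Real.exp_pos (-x)]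
    _ = Real.exp (x - Real.log m) := by
        rw [Real.exp_sub, Real.exp_log hm', Real.exp_neg]; field_simp

theorem ofReal_le_indicator_add_tsum_indicator {t x L : ℝ} (ht : t ≤ 1)
    (htx : t ≤ Real.exp (x - L)) (j : ℕ) :
    ENNReal.ofReal t ≤ (Ioi (L - j)).indicator 1 x +
      ∑' k : ℕ, (Ioi (L - (j + k + 1 : ℕ))).indicator
        (fun _ => ENNReal.ofReal (Real.exp (-(j + k : ℕ)))) x := by
  rcases lt_or_ge (L - j) x with hx | hx
  · rw [indicator_of_mem (show x ∈ Ioi (L - j) from hx)]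
    exact le_add_right (ENNReal.ofReal_le_one.2 ht)
  set n := ⌊L - x⌋₊
  have hjn : j ≤ n := Nat.le_floor (by linarith)
  have hxn : x ∈ Ioi (L - (j + (n - j) + 1 : ℕ)) := by
    rw [Nat.add_sub_cancel' hjn, mem_Ioi]
    push_cast
    linarith [Nat.lt_floor_add_one (L - x)]
  refine le_add_left (le_trans ?_ (ENNReal.le_tsum (n - j)))
  rw [indicator_of_mem hxn, Nat.add_sub_cancel' hjn]
  exact ENNReal.ofReal_le_ofReal
    (htx.trans (Real.exp_le_exp.2 (by linarith [Nat.floor_le (by linarith : 0 ≤ L - x)])))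

section GeomMixture

variable {ν : Measure ℝ}

theorem ofReal_mul_le_lintegral_geomTail {m : ℕ} (hm : 1 ≤ m) (y : ℝ) :
    ENNReal.ofReal (1 - 2 * Real.exp (-y)) * ν (Ioi (Real.log m + y)) ≤
      ∫⁻ x, ENNReal.ofReal (geomTail m x) ∂ν := by
  rw [← setLIntegral_const]
  exact (setLIntegral_mono' measurableSet_Ioi fun x hx =>
    ENNReal.ofReal_le_ofReal (one_sub_two_mul_exp_neg_le_geomTail hm hx)).trans
      (setLIntegral_le_lintegral _ _)

theorem lintegral_geomTail_le_tsum {m : ℕ} (hm : 1 ≤ m) (j : ℕ) :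
    ∫⁻ x, ENNReal.ofReal (geomTail m x) ∂ν ≤ ν (Ioi (Real.log m - j)) +
      ∑' k : ℕ, ENNReal.ofReal (Real.exp (-(j + k : ℕ))) *
        ν (Ioi (Real.log m - (j + k + 1 : ℕ))) := by
  calc ∫⁻ x, ENNReal.ofReal (geomTail m x) ∂ν
      ≤ ∫⁻ x, ((Ioi (Real.log m - j)).indicator 1 x +
          ∑' k : ℕ, (Ioi (Real.log m - (j + k + 1 : ℕ))).indicator
            (fun _ => ENNReal.ofReal (Real.exp (-(j + k : ℕ)))) x) ∂ν :=
        lintegral_mono fun x => ofReal_le_indicator_add_tsum_indicator (geomTail_le_one m x)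
          (geomTail_le_exp_sub_log hm x) j
    _ = _ := by
        rw [lintegral_add_left (measurable_one.indicator measurableSet_Ioi),
          lintegral_tsum fun k => (measurable_const.indicator measurableSet_Ioi).aemeasurable]
        simp only [lintegral_indicator_const measurableSet_Ioi, Pi.one_def, one_mul]

theorem lintegral_geomTail_le [IsFiniteMeasure ν] {C x₀ : ℝ} (hC0 : 0 ≤ C)
    (hC : ∀ x ≥ x₀, ∀ k : ℕ, ν.real (Ioi (x - k)) ≤ C * 2 ^ k * ν.real (Ioi x))
    {m : ℕ} (hm : 1 ≤ m) (hx₀ : x₀ ≤ Real.log m) (j : ℕ) :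
    ∫⁻ x, ENNReal.ofReal (geomTail m x) ∂ν ≤ ENNReal.ofReal (ν.real (Ioi (Real.log m - j)) +
      2 * C * (1 - 2 / Real.exp 1)⁻¹ * (2 / Real.exp 1) ^ j * ν.real (Ioi (Real.log m))) := by
  set L := Real.log m
  set r := 2 / Real.exp 1
  have hr0 : 0 ≤ r := by positivity
  have hr1 : r < 1 :=
    (div_lt_one (Real.exp_pos 1)).2 (by linarith [Real.add_one_lt_exp one_ne_zero])
  set c := 2 * C * ν.real (Ioi L) * r ^ j
  have hc : 0 ≤ c := by positivity
  have hterm : ∀ k : ℕ, ENNReal.ofReal (Real.exp (-(j + k : ℕ))) * ν (Ioi (L - (j + k + 1 : ℕ)))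
      ≤ ENNReal.ofReal (c * r ^ k) := by
    intro k
    rw [← ofReal_measureReal, ← ENNReal.ofReal_mul (Real.exp_pos _).le]
    refine ENNReal.ofReal_le_ofReal ?_
    calc Real.exp (-(j + k : ℕ)) * ν.real (Ioi (L - (j + k + 1 : ℕ)))
        ≤ Real.exp (-(j + k : ℕ)) * (C * 2 ^ (j + k + 1) * ν.real (Ioi L)) := by
          gcongr; exact hC L hx₀ _
      _ = c * r ^ k := by
          rw [Real.exp_neg, ← Real.exp_one_pow]
          simp only [c, r, div_pow, pow_add]
          field_simp
  calc ∫⁻ x, ENNReal.ofReal (geomTail m x) ∂ν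
      ≤ ν (Ioi (L - j)) + ∑' k : ℕ, ENNReal.ofReal (c * r ^ k) :=
        (lintegral_geomTail_le_tsum hm j).trans (by gcongr with k; exact hterm k)
    _ = ENNReal.ofReal (ν.real (Ioi (L - j)) + c * (1 - r)⁻¹) := by
        rw [← ENNReal.ofReal_tsum_of_nonneg (fun k => by positivity)
          ((summable_geometric_of_lt_one hr0 hr1).mul_left c), tsum_mul_left,
          tsum_geometric_of_lt_one hr0 hr1, ENNReal.ofReal_add measureReal_nonneg
          (mul_nonneg hc (inv_nonneg.2 (by linarith))), ofReal_measureReal]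
    _ = _ := by congr 1; ring

theorem lintegral_geomTail_ne_top [IsFiniteMeasure ν] (m : ℕ) :
    ∫⁻ x, ENNReal.ofReal (geomTail m x) ∂ν ≠ ⊤ :=
  ((lintegral_mono fun x => ENNReal.ofReal_le_one.2 (geomTail_le_one m x)).trans_lt
    (by simp [measure_lt_top])).ne

theorem tendsto_lintegral_geomTail_div_measureReal_Ioi_log [IsFiniteMeasure ν]
    (hlong : IsLongTailedFun fun x => ν.real (Ioi x)) :
    Tendsto (fun m : ℕ => (∫⁻ x, ENNReal.ofReal (geomTail m x) ∂ν).toReal /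
      ν.real (Ioi (Real.log m))) atTop (𝓝 1) := by
  set F : ℝ → ℝ := fun x => ν.real (Ioi x)
  obtain ⟨C, hC0, x₀, hC⟩ := hlong.exists_sub_natCast_le_mul_two_pow_mul
    (fun _ _ hab => measureReal_mono (Ioi_subset_Ioi hab))
    (fun _ => measureReal_mono (subset_univ _))
  have hlog : Tendsto (fun m : ℕ => Real.log m) atTop atTop :=
    Real.tendsto_log_atTop.comp tendsto_natCast_atTop_atTop
  have hratio (y : ℝ) : Tendsto (fun m : ℕ => F (Real.log m - y) / F (Real.log m)) atTop (𝓝 1) :=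
    (hlong.2 y).comp hlog
  set r := 2 / Real.exp 1
  have hr1 : r < 1 :=
    (div_lt_one (Real.exp_pos 1)).2 (by linarith [Real.add_one_lt_exp one_ne_zero])
  set D := 2 * C * (1 - r)⁻¹
  refine tendsto_of_forall_eventually_le_of_le (p := atTop)
    (a := fun (j m : ℕ) => (1 - 2 * Real.exp (-j)) * (F (Real.log m - -j) / F (Real.log m)))
    (b := fun (j m : ℕ) => F (Real.log m - j) / F (Real.log m) + D * r ^ j)
    (fun j => by simpa using (hratio (-j)).const_mul (1 - 2 * Real.exp (-j)))
    (fun j => by simpa using (hratio j).add_const (D * r ^ j)) ?_ ?_ (fun j => ?_) (fun j => ?_)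
  · simpa using ((Real.tendsto_exp_neg_atTop_nhds_zero.comp tendsto_natCast_atTop_atTop).const_mul
      2).const_sub 1
  · simpa using
      ((tendsto_pow_atTop_nhds_zero_of_lt_one (by positivity) hr1).const_mul D).const_add 1
  · filter_upwards [eventually_ge_atTop 1] with m hm
    have hlow := ENNReal.toReal_mono (lintegral_geomTail_ne_top m)
      (ofReal_mul_le_lintegral_geomTail (ν := ν) hm j)
    rw [ENNReal.toReal_mul, ENNReal.toReal_ofReal', ← measureReal_def] at hlow
    rw [← mul_div_assoc, sub_neg_eq_add]
    exact div_le_div_of_nonneg_right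
      ((mul_le_mul_of_nonneg_right (le_max_left _ _) measureReal_nonneg).trans hlow)
      measureReal_nonneg
  · filter_upwards [eventually_ge_atTop 1, hlog.eventually_ge_atTop x₀] with m hm hx
    have hup :=
      ENNReal.toReal_le_of_le_ofReal (by positivity) (lintegral_geomTail_le hC0 hC hm hx j)
    rw [div_add' _ _ _ (hlong.1 _).ne']
    exact div_le_div_of_nonneg_right (by linarith) (hlong.1 _).le

end GeomMixture

theorem inv_one_add_exp_neg_log_odds {a : ℝ} (h0 : 0 < a) (h1 : a < 1) :
    (1 + Real.exp (-Real.log ((1 - a) / a)))⁻¹ = 1 - a := by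
  have h1a : 1 - a ≠ 0 := by linarith
  rw [Real.exp_neg, Real.exp_log (div_pos (by linarith) h0), inv_div, one_add_div h1a]
  simp

theorem first_generation_tail_general {Ω : Type*} [MeasurableSpace Ω]
    (μ : Measure Ω) [IsProbabilityMeasure μ]
    (A0 : Ω → ℝ) (hA0meas : Measurable A0) (hA01 : ∀ ω, A0 ω ∈ Set.Ioo (0 : ℝ) 1)
    (Z1 : Ω → ℕ)
    (hcond : ∀ m : ℕ, ∀ E : Set Ω, MeasurableSet[MeasurableSpace.comap A0 inferInstance] E →
      μ (E ∩ {ω | m < Z1 ω})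
        = ∫⁻ ω in E, ENNReal.ofReal ((1 - A0 ω) ^ (m + 1)) ∂μ)
    (ξ : Ω → ℝ) (hξ : ∀ ω, ξ ω = Real.log ((1 - A0 ω) / A0 ω))
    (Fbar : ℝ → ℝ) (hFbar : ∀ x, Fbar x = (μ {ω | x < ξ ω}).toReal)
    (hlong : IsLongTailedFun Fbar) :
    Tendsto (fun m : ℕ => (μ {ω | m < Z1 ω}).toReal / Fbar (Real.log m))
      atTop (nhds 1) := by
  have hξmeas : Measurable ξ := by rw [funext hξ]; fun_prop
  have hFbar_map : Fbar = fun x => (μ.map ξ).real (Set.Ioi x) := by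
    ext x
    rw [hFbar, measureReal_def, Measure.map_apply hξmeas measurableSet_Ioi]
    rfl
  have hZ1_tail (m : ℕ) :
      μ {ω | m < Z1 ω} = ∫⁻ x, ENNReal.ofReal (geomTail m x) ∂(μ.map ξ) := by
    rw [lintegral_map (measurable_geomTail m).ennreal_ofReal hξmeas]
    simpa [geomTail, hξ, inv_one_add_exp_neg_log_odds (hA01 _).1 (hA01 _).2] using
      hcond m Set.univ MeasurableSet.univ
  simp_rw [hZ1_tail, hFbar_map]
  exact tendsto_lintegral_geomTail_div_measureReal_Ioi_log (hFbar_map ▸ hlong)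

/-- First generation of the branching process with one immigrant in random
environment: `Z₁` is geometric with random parameter `A₀`, so that
`P(Z₁ > m | A₀) = (1-A₀)^(m+1)`.  If `ξ = log((1-A₀)/A₀)` has a long-tailed
distribution `F`, then `P(Z₁ > m) ∼ F̄(log m)` as `m → ∞`. -/
theorem first_generation_tail {Ω : Type*} [MeasurableSpace Ω]
    (μ : Measure Ω) [IsProbabilityMeasure μ]
    (A0 : Ω → ℝ) (hA0meas : Measurable A0) (hA01 : ∀ ω, A0 ω ∈ Set.Ioo (0 : ℝ) 1)
    (Z1 : Ω → ℕ) (hZ1meas : Measurable Z1)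
    (hcond : ∀ m : ℕ, ∀ E : Set Ω, MeasurableSet[MeasurableSpace.comap A0 inferInstance] E →
      μ (E ∩ {ω | m < Z1 ω})
        = ∫⁻ ω in E, ENNReal.ofReal ((1 - A0 ω) ^ (m + 1)) ∂μ)
    (ξ : Ω → ℝ) (hξ : ∀ ω, ξ ω = Real.log ((1 - A0 ω) / A0 ω))
    (Fbar : ℝ → ℝ) (hFbar : ∀ x, Fbar x = (μ {ω | x < ξ ω}).toReal)
    (hlong : IsLongTailedFun Fbar) :
    Tendsto (fun m : ℕ => (μ {ω | m < Z1 ω}).toReal / Fbar (Real.log m))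
      atTop (nhds 1) :=
  first_generation_tail_general μ A0 hA0meas hA01 Z1 hcond ξ hξ Fbar hFbar hlong
end

section
/- For the branching process in bounded random environment (A ≤ Â < 1 a.s.), there is δ > 0 (depending only on Â and ε > 0) such that for every l ≥ 1 and every generation j, P(Z_j ≤ l·a_{A_{j-1}}·e^{-ε} | Z_{j-1} = l, 𝒜) ≤ e^{-lδ}, where a_A = (1-A)/A. -/
/-!
Conditionally on the environment the new generation is a sum of `l + 1` i.i.d. geometric
variables with success probability `A` and mean `a = (1 - A) / A`, so by the exponential Chebyshev
inequality it suffices to find `λ > 0` and `q > e^{-ε}` with `E[exp(λ (q - B / a))] ≤ 1`.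
Writing `r = 1 / a`, this reads `A e^{λ q} + (1 - A) e^{-λ r} ≤ 1`, i.e.
`r e^{λ q} + e^{-λ r} ≤ r + 1`, which holds as soon as `λ (q + r) ≤ -log q`.
Since `r ≤ Â / (1 - Â)`, the choice `q = e^{-ε/2}`, `λ = (ε / 2) / (1 + Â / (1 - Â))`
works for every environment at once, and gives `δ = λ (q - e^{-ε})`.
-/

open MeasureTheory ProbabilityTheory Real

lemma exp_sub_one_le_mul_exp (x : ℝ) : exp x - 1 ≤ x * exp x := by
  have h := mul_le_mul_of_nonneg_right (one_sub_le_exp_neg x) (exp_pos x).le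
  rw [← exp_add, neg_add_cancel, exp_zero] at h
  linarith

lemma mul_exp_add_exp_neg_le_add_one {q r s : ℝ} (hq : 0 < q) (hr : 0 ≤ r) (hs : 0 ≤ s)
    (hsq : s * (q + r) ≤ -log q) :
    r * exp (s * q) + exp (-(s * r)) ≤ r + 1 := by
  have h_slope : q * exp (s * q) ≤ exp (-(s * r)) := by
    calc q * exp (s * q) = exp (log q + s * q) := by rw [exp_add, exp_log hq]
      _ ≤ exp (-(s * r)) := exp_le_exp.mpr (by linarith)
  -- `r (e^{sq} - 1) ≤ r s q e^{sq} ≤ r s e^{-sr} ≤ 1 - e^{-sr}`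
  have h_left := mul_le_mul_of_nonneg_left (exp_sub_one_le_mul_exp (s * q)) hr
  have h_middle := mul_le_mul_of_nonneg_left h_slope (mul_nonneg hr hs)
  have h_right := exp_sub_one_le_mul_exp (-(s * r))
  linarith

lemma div_one_sub_mul_exp_le_exp {A q s : ℝ} (hA0 : 0 < A) (hA1 : A < 1) (hq : 0 < q)
    (hs : 0 ≤ s) (hsq : s * (q + A / (1 - A)) ≤ -log q) :
    A / (1 - (1 - A) * exp (-(s * (A / (1 - A))))) ≤ exp (-(s * q)) := by
  have h1A : 0 < 1 - A := by linarith
  have h_key := mul_le_mul_of_nonneg_left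
    (mul_exp_add_exp_neg_le_add_one hq (div_pos hA0 h1A).le hs hsq) h1A.le
  have h_odds : (1 - A) * (A / (1 - A)) = A := by field_simp
  rw [mul_add, mul_add, ← mul_assoc, h_odds] at h_key
  rw [div_le_iff₀ (by nlinarith [exp_pos (s * q)]), exp_neg, ← div_eq_inv_mul,
    le_div_iff₀ (exp_pos _)]
  linarith

lemma mgf_natCast_geometricMeasure {p : unitInterval} (hp : p ≠ 0) {t : ℝ}
    (ht : (1 - p) * exp t < 1) :
    mgf (fun n : ℕ ↦ (n : ℝ)) (geometricMeasure p) t = p / (1 - (1 - p) * exp t) := by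
  have hterm : ∀ n : ℕ, ((1 - p : ℝ) ^ n * p) • exp (t * n) = p * ((1 - p) * exp t) ^ n := by
    intro n
    rw [smul_eq_mul, mul_pow, ← exp_nat_mul, mul_comm (n : ℝ) t]
    ring
  have h1p : (0 : ℝ) ≤ 1 - p := by simpa using p.2.2
  rw [mgf, integral_geometricMeasure hp]
  simp_rw [hterm]
  rw [tsum_mul_left, tsum_geometric_of_lt_one (by positivity) ht, div_eq_mul_inv]

lemma hasLaw_geometricMeasure {Ω : Type*} [MeasurableSpace Ω] {μ : Measure Ω} {B : Ω → ℕ}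
    (hB : Measurable B) {p : unitInterval} (hp : p ≠ 0)
    (hpmf : ∀ k : ℕ, μ {ω | B ω = k} = ENNReal.ofReal (p * (1 - p) ^ k)) :
    HasLaw B (geometricMeasure p) μ where
  aemeasurable := hB.aemeasurable
  map_eq := Measure.ext_of_singleton fun k ↦ by
    rw [Measure.map_apply hB (measurableSet_singleton k), geometricMeasure_singleton hp, mul_comm]
    exact hpmf k

section GeometricSum

variable {Ω : Type*} [MeasurableSpace Ω] {μ : Measure Ω} [IsProbabilityMeasure μ]

lemma measureReal_sum_le_le_of_geometric {ι : Type*} [Fintype ι] {B : ι → Ω → ℕ}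
    {p : unitInterval} (hp : p ≠ 0) (hind : iIndepFun B μ)
    (hlaw : ∀ i, HasLaw (B i) (geometricMeasure p) μ) (c : ℝ) {t : ℝ} (ht : t ≤ 0) :
    μ.real {ω | ((∑ i, B i ω : ℕ) : ℝ) ≤ c} ≤
      exp (-t * c) * (p / (1 - (1 - p) * exp t)) ^ Fintype.card ι := by
  set X : ι → Ω → ℝ := fun i ω ↦ B i ω
  have hX_meas : ∀ i, AEMeasurable (X i) μ := fun i ↦
    measurable_from_top.comp_aemeasurable (hlaw i).aemeasurable
  have hX_ind : iIndepFun X μ := hind.comp _ fun _ ↦ measurable_from_top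
  have h_ratio : (1 - p) * exp t < 1 := by
    have hp_pos : (0 : ℝ) < p := unitInterval.pos_iff_ne_zero.mpr hp
    nlinarith [exp_le_one_iff.mpr ht, exp_pos t, p.2.2]
  have hX_mgf : ∀ i, mgf (X i) μ t = p / (1 - (1 - p) * exp t) := fun i ↦ by
    rw [← mgf_natCast_geometricMeasure hp h_ratio,
      ← (hlaw i).map_eq, mgf_map (hlaw i).aemeasurable (by fun_prop)]
    rfl
  have h_int : Integrable (fun ω ↦ exp (t * (∑ i, X i) ω)) μ := by
    refine .of_bound (by fun_prop) 1 (ae_of_all _ fun ω ↦ ?_)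
    rw [norm_of_nonneg (exp_pos _).le, exp_le_one_iff]
    exact mul_nonpos_of_nonpos_of_nonneg ht
      (by simpa only [Finset.sum_apply] using Finset.sum_nonneg fun i _ ↦ (B i ω).cast_nonneg)
  have h_set : {ω | ((∑ i, B i ω : ℕ) : ℝ) ≤ c} = {ω | (∑ i, X i) ω ≤ c} := by
    ext ω
    simp [X]
  rw [h_set, ← Finset.card_univ, ← Finset.prod_const, ← Finset.prod_congr rfl fun i _ ↦ hX_mgf i,
    ← hX_ind.mgf_sum₀ hX_meas]
  exact measure_le_le_exp_mul_mgf c ht h_int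

lemma measureReal_sum_le_le_exp_of_geometric {l : ℕ} {B : Fin (l + 1) → Ω → ℕ} {A q s x : ℝ}
    (hA0 : 0 < A) (hA1 : A < 1) (hind : iIndepFun B μ)
    (hlaw : ∀ i, HasLaw (B i) (geometricMeasure ⟨A, hA0.le, hA1.le⟩) μ)
    (hq : 0 < q) (hs : 0 ≤ s) (hsq : s * (q + A / (1 - A)) ≤ -log q) :
    μ.real {ω | ((∑ i, B i ω : ℕ) : ℝ) ≤ l * ((1 - A) / A) * x} ≤
      exp (-l * (s * (q - x))) := by
  set r := A / (1 - A)
  have hr : 0 ≤ r := div_nonneg hA0.le (by linarith)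
  have h_chernoff := measureReal_sum_le_le_of_geometric (unitInterval.pos_iff_ne_zero.mp hA0)
    hind hlaw (l * ((1 - A) / A) * x) (neg_nonpos.mpr (mul_nonneg hs hr))
  have h_exponent : -(-(s * r)) * (l * ((1 - A) / A) * x) = s * l * x := by
    have h1A : 1 - A ≠ 0 := (sub_pos.mpr hA1).ne'
    simp only [r]
    field_simp
  have hM_nonneg : 0 ≤ A / (1 - (1 - A) * exp (-(s * r))) := by
    have : exp (-(s * r)) ≤ 1 := exp_le_one_iff.mpr (neg_nonpos.mpr (mul_nonneg hs hr))
    exact div_nonneg hA0.le (by nlinarith)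
  have hM := div_one_sub_mul_exp_le_exp hA0 hA1 hq hs hsq
  rw [Fintype.card_fin, h_exponent] at h_chernoff
  refine h_chernoff.trans ?_
  calc _ ≤ exp (s * l * x) * exp (-(s * q)) ^ (l + 1) := by gcongr
    _ ≤ exp (s * l * x) * exp (-(s * q)) ^ l := by
        refine mul_le_mul_of_nonneg_left (pow_le_pow_of_le_one (exp_pos _).le ?_ l.le_succ)
          (exp_pos _).le
        exact exp_le_one_iff.mpr (neg_nonpos.mpr (mul_nonneg hs hq.le))
    _ = exp (-l * (s * (q - x))) := by rw [← exp_nat_mul, ← exp_add]; ring_nf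

end GeometricSum

/-- In bounded random environment (`A ≤ Â < 1`), one generation of the
branching process started from `l` particles (plus one immigrant) falls below
`l a_A e^{-ε}` with probability at most `e^{-lδ}`, where `a_A = (1-A)/A` and
`δ > 0` depends only on `Â` and `ε`.  Conditionally on the environment the new
generation is a sum of `l + 1` i.i.d. geometric(`A`) variables. -/
theorem one_step_lower_deviation (Ahat ε : ℝ) (hAhat : Ahat < 1) (hε : 0 < ε) :
    ∃ δ > (0 : ℝ),
      ∀ (Ω : Type) (_ : MeasurableSpace Ω) (μ : Measure Ω),
        IsProbabilityMeasure μ →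
        ∀ A : ℝ, A ∈ Set.Ioc (0 : ℝ) Ahat →
        ∀ l : ℕ, 1 ≤ l →
        ∀ B : Fin (l + 1) → Ω → ℕ, (∀ i, Measurable (B i)) →
          iIndepFun B μ →
          (∀ i, ∀ k : ℕ, μ {ω | B i ω = k} = ENNReal.ofReal (A * (1 - A) ^ k)) →
          μ {ω | ((∑ i, B i ω : ℕ) : ℝ) ≤ l * ((1 - A) / A) * Real.exp (-ε)}
            ≤ ENNReal.ofReal (Real.exp (-(l : ℝ) * δ)) := by
  set q := exp (-(ε / 2))
  set K := max (Ahat / (1 - Ahat)) 0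
  set s := ε / 2 / (1 + K)
  have hs : 0 < s := div_pos (half_pos hε) (by positivity)
  have hq : exp (-ε) < q := exp_lt_exp.mpr (by linarith)
  refine ⟨s * (q - exp (-ε)), mul_pos hs (sub_pos.mpr hq), ?_⟩
  rintro Ω _ μ _ A ⟨hA0, hAle⟩ l - B hB_meas hB_ind hB_pmf
  have hA1 : A < 1 := hAle.trans_lt hAhat
  have hr : A / (1 - A) ≤ K :=
    (div_le_div₀ (hA0.le.trans hAle) hAle (by linarith) (by linarith)).trans (le_max_left _ _)
  have hsq : s * (q + A / (1 - A)) ≤ -log q := by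
    calc s * (q + A / (1 - A)) ≤ s * (1 + K) := by
          gcongr; exact exp_le_one_iff.mpr (by linarith)
      _ = -log q := by rw [log_exp, neg_neg]; exact div_mul_cancel₀ _ (by positivity)
  have hlaw := fun i ↦ hasLaw_geometricMeasure (hB_meas i)
    (p := ⟨A, hA0.le, hA1.le⟩) (unitInterval.pos_iff_ne_zero.mp hA0) (hB_pmf i)
  rw [← ofReal_measureReal]
  exact ENNReal.ofReal_le_ofReal
    (measureReal_sum_le_le_exp_of_geometric hA0 hA1 hB_ind hlaw (exp_pos _) hs.le hsq)
end

section
/- For i.i.d. random variables ξ_1, ξ_2 with common subexponential distribution F, for every δ > 0 there exist K and ε > 0 such that for all sufficiently large x, P(ξ_1 + ξ_2 > x, ξ_2 ∈ (log K, x − log(1/ε)]) ≤ δ F̄(x). -/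
/-!
Split the event `{x < ξ₁ + ξ₂}` according to where `ξ₂` lies: in `(log K, x - log (1/ε)]`
(the middle range), in `(b, a]` with `ξ₁ > x - b`, or above `x - b` with `ξ₁ > b`, where
`a = log K` and `b = log (1/ε)`. By independence the last two events have probabilities at least
`F̄(x - b) (F̄(b) - F̄(a))` and `F̄(b) F̄(x - b)`. Taking `b` so negative that `F̄(b) ≈ 1` and `a` so
large that `F̄(a) ≈ 0`, long-tailedness gives `F̄(x - b) ≈ F̄(x)`, so together they carry
probability `≈ 2 F̄(x)`; subexponentiality says this is already all of `P(ξ₁ + ξ₂ > x)`, so the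
middle range carries only a small multiple of `F̄(x)`.
-/

open MeasureTheory ProbabilityTheory Filter

open Set Topology

section Tail

variable {Ω : Type*} [MeasurableSpace Ω] {μ : Measure Ω} [IsProbabilityMeasure μ] {X : Ω → ℝ}

lemma measureReal_lt_eq_one_sub_cdf (hX : Measurable X) (c : ℝ) :
    μ.real {ω | c < X ω} = 1 - cdf (μ.map X) c := by
  have : IsProbabilityMeasure (μ.map X) := Measure.isProbabilityMeasure_map hX.aemeasurable
  rw [cdf_eq_real, ← probReal_compl_eq_one_sub measurableSet_Iic, compl_Iic,
    map_measureReal_apply hX measurableSet_Ioi]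
  rfl

lemma tendsto_measureReal_lt_atTop (hX : Measurable X) :
    Tendsto (fun c => μ.real {ω | c < X ω}) atTop (𝓝 0) := by
  simp_rw [measureReal_lt_eq_one_sub_cdf hX]
  simpa using (tendsto_cdf_atTop (μ.map X)).const_sub 1

lemma tendsto_measureReal_lt_atBot (hX : Measurable X) :
    Tendsto (fun c => μ.real {ω | c < X ω}) atBot (𝓝 1) := by
  simp_rw [measureReal_lt_eq_one_sub_cdf hX]
  simpa using (tendsto_cdf_atBot (μ.map X)).const_sub 1

end Tail

section MiddleRange

variable {Ω : Type*} [MeasurableSpace Ω] {μ : Measure Ω} {X Y : Ω → ℝ}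

lemma ProbabilityTheory.IndepFun.measureReal_inter_preimage_eq_mul (hXY : IndepFun X Y μ)
    {s t : Set ℝ} (hs : MeasurableSet s) (ht : MeasurableSet t) :
    μ.real (X ⁻¹' s ∩ Y ⁻¹' t) = μ.real (X ⁻¹' s) * μ.real (Y ⁻¹' t) := by
  simp only [measureReal_def, ← ENNReal.toReal_mul, hXY.measure_inter_preimage_eq_mul s t hs ht]

lemma sub_measureReal_lt_le_measureReal_Ioc [IsFiniteMeasure μ] (a b : ℝ) :
    μ.real {ω | b < Y ω} - μ.real {ω | a < Y ω} ≤ μ.real {ω | Y ω ∈ Ioc b a} := by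
  have hcover : μ.real {ω | b < Y ω} ≤ μ.real ({ω | Y ω ∈ Ioc b a} ∪ {ω | a < Y ω}) :=
    measureReal_mono fun ω hω => (le_or_gt (Y ω) a).imp (fun h => ⟨hω, h⟩) id
  linarith [measureReal_union_le (μ := μ) {ω | Y ω ∈ Ioc b a} {ω | a < Y ω}]

variable [IsFiniteMeasure μ] {a b x : ℝ}

lemma measureReal_middle_range_add_le (hX : Measurable X) (hY : Measurable Y)
    (hXY : IndepFun X Y μ) (hax : a ≤ x - b) :
    μ.real {ω | x < X ω + Y ω ∧ Y ω ∈ Ioc a (x - b)}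
        + μ.real {ω | x - b < X ω} * μ.real {ω | Y ω ∈ Ioc b a}
        + μ.real {ω | b < X ω} * μ.real {ω | x - b < Y ω}
      ≤ μ.real {ω | x < X ω + Y ω} := by
  set M := {ω | x < X ω + Y ω ∧ Y ω ∈ Ioc a (x - b)}
  set L₁ := X ⁻¹' Ioi (x - b) ∩ Y ⁻¹' Ioc b a
  set L₂ := X ⁻¹' Ioi b ∩ Y ⁻¹' Ioi (x - b)
  have hL₁ : MeasurableSet L₁ := (hX measurableSet_Ioi).inter (hY measurableSet_Ioc)
  have hL₂ : MeasurableSet L₂ := (hX measurableSet_Ioi).inter (hY measurableSet_Ioi)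
  have hML₁ : Disjoint M L₁ := disjoint_left.2 fun ω hM hL => hM.2.1.not_ge hL.2.2
  have hML₂ : Disjoint (M ∪ L₁) L₂ := by
    refine disjoint_left.2 fun ω hML hL => ?_
    rcases hML with hM | hL'
    · exact hM.2.2.not_gt hL.2
    · exact (hL'.2.2.trans hax).not_gt hL.2
  have hsub : M ∪ L₁ ∪ L₂ ⊆ {ω | x < X ω + Y ω} := by
    rintro ω ((hM | ⟨hXω, hYω⟩) | ⟨hXω, hYω⟩)
    · exact hM.1
    · simp only [mem_preimage, mem_Ioi, mem_Ioc] at hXω hYω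
      show x < X ω + Y ω
      linarith [hYω.1]
    · simp only [mem_preimage, mem_Ioi] at hXω hYω
      show x < X ω + Y ω
      linarith
  calc _ = μ.real (M ∪ L₁ ∪ L₂) := by
        rw [measureReal_union hML₂ hL₂, measureReal_union hML₁ hL₁,
          hXY.measureReal_inter_preimage_eq_mul measurableSet_Ioi measurableSet_Ioc,
          hXY.measureReal_inter_preimage_eq_mul measurableSet_Ioi measurableSet_Ioi]
        rfl
    _ ≤ _ := measureReal_mono hsub

lemma measureReal_middle_range_le (hX : Measurable X) (hY : Measurable Y)
    (hXY : IndepFun X Y μ) (hid : IdentDistrib X Y μ μ) (hax : a ≤ x - b) :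
    μ.real {ω | x < X ω + Y ω ∧ Y ω ∈ Ioc a (x - b)}
      ≤ μ.real {ω | x < X ω + Y ω}
        - μ.real {ω | x - b < X ω} * (2 * μ.real {ω | b < X ω} - μ.real {ω | a < X ω}) := by
  have htail (c : ℝ) : μ.real {ω | c < Y ω} = μ.real {ω | c < X ω} :=
    congrArg ENNReal.toReal (hid.measure_mem_eq measurableSet_Ioi).symm
  have hIoc := sub_measureReal_lt_le_measureReal_Ioc (μ := μ) (Y := Y) a b
  have hsplit := measureReal_middle_range_add_le hX hY hXY hax
  rw [htail, htail] at hIoc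
  rw [htail] at hsplit
  nlinarith [measureReal_nonneg (μ := μ) (s := {ω | x - b < X ω})]

end MiddleRange

/-- "No two big jumps" for a subexponential distribution: if `ξ₁, ξ₂` are
i.i.d. with common subexponential distribution `F`, then for every `δ > 0`
there are `K` and `ε > 0` such that for all large `x`,
`P(ξ₁ + ξ₂ > x, ξ₂ ∈ (log K, x − log(1/ε)]) ≤ δ F̄(x)`. -/
theorem subexponential_middle_range {Ω : Type*} [MeasurableSpace Ω]
    (μ : Measure Ω) [IsProbabilityMeasure μ]
    (ξ₁ ξ₂ : Ω → ℝ) (h₁ : Measurable ξ₁) (h₂ : Measurable ξ₂)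
    (hindep : IndepFun ξ₁ ξ₂ μ) (hid : IdentDistrib ξ₁ ξ₂ μ μ)
    (Fbar : ℝ → ℝ) (hFbar : ∀ x, Fbar x = (μ {ω | x < ξ₁ ω}).toReal)
    (hlong : IsLongTailedFun Fbar)
    (hsubexp : Tendsto (fun x => (μ {ω | x < ξ₁ ω + ξ₂ ω}).toReal / Fbar x)
      atTop (nhds 2))
    (δ : ℝ) (hδ : 0 < δ) :
    ∃ K : ℝ, ∃ ε > (0 : ℝ), ∃ x₀ : ℝ, ∀ x ≥ x₀,
      (μ {ω | x < ξ₁ ω + ξ₂ ω ∧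
          ξ₂ ω ∈ Set.Ioc (Real.log K) (x - Real.log (1 / ε))}).toReal
        ≤ δ * Fbar x := by
  simp only [← measureReal_def] at hFbar hsubexp ⊢
  have hF : (fun c => μ.real {ω | c < ξ₁ ω}) = Fbar := (funext hFbar).symm
  set η := min (δ / 6) (1 / 2)
  have hη₀ : 0 < η := by positivity
  have hηδ : η ≤ δ / 6 := min_le_left _ _
  have hη₁ : η ≤ 1 / 2 := min_le_right _ _
  obtain ⟨b, hb⟩ := ((hF ▸ tendsto_measureReal_lt_atBot h₁).eventually_const_lt
    (by linarith : 1 - η < 1)).exists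
  obtain ⟨a, ha⟩ := ((hF ▸ tendsto_measureReal_lt_atTop h₁).eventually_lt_const hη₀).exists
  obtain ⟨x₀, hx₀⟩ := eventually_atTop.1 <|
    ((hsubexp.eventually_lt_const (by linarith : (2 : ℝ) < 2 + η)).and
      ((hlong.2 b).eventually_const_lt (by linarith : 1 - η < 1))).and (eventually_ge_atTop (a + b))
  refine ⟨Real.exp a, Real.exp (-b), Real.exp_pos _, x₀, fun x hx => ?_⟩
  obtain ⟨⟨hsum, hshift⟩, hab⟩ := hx₀ x hx
  rw [Real.log_exp, one_div, ← Real.exp_neg, neg_neg, Real.log_exp]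
  have hFx := hlong.1 x
  rw [div_lt_iff₀ hFx] at hsum
  rw [lt_div_iff₀ hFx] at hshift
  calc _ ≤ μ.real {ω | x < ξ₁ ω + ξ₂ ω} - Fbar (x - b) * (2 * Fbar b - Fbar a) := by
        simpa only [← hFbar] using measureReal_middle_range_le h₁ h₂ hindep hid (by linarith)
    _ ≤ (2 + η) * Fbar x - (1 - η) * Fbar x * (2 - 3 * η) :=
        sub_le_sub hsum.le (mul_le_mul hshift.le (by linarith) (by linarith) (hlong.1 _).le)
    _ ≤ δ * Fbar x := by nlinarith [mul_nonneg (sq_nonneg η) hFx.le]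
end
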